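/- arXiv:1505.05048 — 2 statements merged into one kernel-verified Lean document; each statement's English description precedes it below -/
import Mathlib

section
/- Let γ ∈ (0,1) and M > 0 be given, and let v₁, v₂ ∈ C^{2,1}(B̄×I) ∩ C(B̄×I) satisfy |v_i|_{2+γ;B×I} < M for i = 1,2. Suppose (v₁^{e₁}, v₂^{e₁}) satisfies: (v₁^{e₁})_t − Δv₁^{e₁} − c₁₁v₁^{e₁} − c₁₂v₂^{e₁} ≥ 0 and (v₂^{e₁})_t − Δv₂^{e₁} − c₂₁v₁^{e₁} − c₂₂v₂^{e₁} ≥ 0 in B(e₁)×I, v₁^{e₁} = v₂^{e₁} = 0 on ∂B(e₁)×I, v₁^{e₁} ≥ 0 and v₂^{e₁} ≥ 0 in B(e₁)×I, with c₁₂ ≥ 0 and c₂₁ ≥ 0 in B(e₁)×I and Σ_{i,j=1,2} ‖c_{ij}‖_{L∞(B(e₁)×I)} < M. If there are δ > 0 and ε₁ > 0 such that ‖v₂^{e₁}‖_{L∞(Q_δ)} > ε₁ and inf_{Q_δ} c₁₂ > ε₁, then there exists σ > 0, depending only on ε₁, δ, M, γ, and B, such that ‖v₁^{e₁}‖_{L∞(Q)}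 > σ. -/
noncomputable section

open Metric Set Filter
open scoped Topology RealInnerProductSpace BigOperators

/-- Euclidean space `ℝ^N`. -/
abbrev Euc (N : ℕ) := EuclideanSpace ℝ (Fin N)

variable {N : ℕ}

/-- The domain `B ⊆ ℝ^N`: the annulus `{A₁ < ‖x‖ < A₂}` if `A₁ > 0`,
the open ball `{‖x‖ < A₂}` if `A₁ = 0`. -/
def domB (N : ℕ) (A₁ A₂ : ℝ) : Set (Euc N) := {x | (A₁ = 0 ∨ A₁ < ‖x‖) ∧ ‖x‖ < A₂}

/-- The unit sphere `S^{N-1}`. -/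
def unitSph (N : ℕ) : Set (Euc N) := {e | ‖e‖ = 1}

/-- Reflection `σ_e` at the hyperplane `H(e) = {x : x ⬝ e = 0}`. -/
def reflHyp (e x : Euc N) : Euc N := x - (2 * ⟪x, e⟫) • e

/-- The half domain `B(e) = {x ∈ B : x ⬝ e > 0}`. -/
def halfB (N : ℕ) (A₁ A₂ : ℝ) (e : Euc N) : Set (Euc N) :=
  {x | x ∈ domB N A₁ A₂ ∧ 0 < ⟪x, e⟫}

/-- Directional (spatial) derivative. -/
def sderiv (f : Euc N → ℝ) (x v : Euc N) : ℝ := fderiv ℝ f x v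

/-- Second directional (spatial) derivative. -/
def sderiv2 (f : Euc N → ℝ) (x v w : Euc N) : ℝ := fderiv ℝ (fun y => fderiv ℝ f y w) x v

/-- The Laplacian. -/
def lapl (f : Euc N → ℝ) (x : Euc N) : ℝ :=
  ∑ i : Fin N, sderiv2 f x (EuclideanSpace.single i 1) (EuclideanSpace.single i 1)

/-- Time derivative of `u(x,t)`. -/
def tderiv (u : Euc N → ℝ → ℝ) (x : Euc N) (t : ℝ) : ℝ := deriv (u x) t

/-- `L^∞`-norm (sup of `|f|`) over a set `A`. -/
def supAbs {α : Type*} (f : α → ℝ) (A : Set α) : ℝ := sSup ((fun p => |f p|) '' A)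

/-- `u ∈ C^{2,1}(S × J)`: the spatial derivatives up to order two and the first time
derivative exist and, together with `u`, are continuous on `S × J`. -/
structure IsC21 (u : Euc N → ℝ → ℝ) (S : Set (Euc N)) (J : Set ℝ) : Prop where
  cont : ContinuousOn (fun p : Euc N × ℝ => u p.1 p.2) (S ×ˢ J)
  diffSpace : ∀ x ∈ S, ∀ t ∈ J, DifferentiableAt ℝ (fun y => u y t) x
  diffSpace2 : ∀ (v : Euc N), ∀ x ∈ S, ∀ t ∈ J,
    DifferentiableAt ℝ (fun y => fderiv ℝ (fun z => u z t) y v) x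
  diffTime : ∀ x ∈ S, ∀ t ∈ J, DifferentiableAt ℝ (u x) t
  contGrad : ∀ (v : Euc N),
    ContinuousOn (fun p : Euc N × ℝ => sderiv (fun y => u y p.2) p.1 v) (S ×ˢ J)
  contHess : ∀ (v w : Euc N),
    ContinuousOn (fun p : Euc N × ℝ => sderiv2 (fun y => u y p.2) p.1 v w) (S ×ˢ J)
  contTime : ContinuousOn (fun p : Euc N × ℝ => tderiv u p.1 p.2) (S ×ˢ J)

/-- `z` is foliated Schwarz symmetric with respect to `p` on `S`: it is axially symmetric
w.r.t. the axis `ℝp` and nonincreasing in the polar angle. -/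
def FoliatedSchwarzSymm (S : Set (Euc N)) (z : Euc N → ℝ) (p : Euc N) : Prop :=
  ∀ x ∈ S, ∀ y ∈ S, ‖x‖ = ‖y‖ → ⟪y, p⟫ ≤ ⟪x, p⟫ → z y ≤ z x

/-- `(z₁, z₂)` belongs to the omega limit set `ω(u₁,u₂)` (uniform convergence on `B`). -/
def InOmega2 (B : Set (Euc N)) (u₁ u₂ : Euc N → ℝ → ℝ) (z₁ z₂ : Euc N → ℝ) : Prop :=
  ContinuousOn z₁ (closure B) ∧ ContinuousOn z₂ (closure B) ∧
  ∃ tn : ℕ → ℝ, Tendsto tn atTop atTop ∧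
    Tendsto (fun n => supAbs (fun x => u₁ x (tn n) - z₁ x) B
      + supAbs (fun x => u₂ x (tn n) - z₂ x) B) atTop (𝓝 0)

/-- Relative boundary of `A` inside `S`. -/
def relBoundary {X : Type*} [TopologicalSpace X] (S A : Set X) : Set X :=
  S ∩ closure A ∩ closure (S \ A)

/-- Parabolic Hölder bound `|g|_{α;S×J} ≤ M` (order `0 + α`). -/
def HolderBound0 (α : ℝ) (g : Euc N → ℝ → ℝ) (S : Set (Euc N)) (J : Set ℝ) (M : ℝ) : Prop :=
  (∀ x ∈ S, ∀ t ∈ J, |g x t| ≤ M) ∧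
  ∀ x ∈ S, ∀ t ∈ J, ∀ y ∈ S, ∀ s ∈ J,
    |g x t - g y s| ≤ M * (‖x - y‖ ^ α + |t - s| ^ (α / 2))

/-- Parabolic Hölder bound `|u|_{1+α;S×J} ≤ M`. -/
def HolderBound1 (α : ℝ) (u : Euc N → ℝ → ℝ) (S : Set (Euc N)) (J : Set ℝ) (M : ℝ) : Prop :=
  (∀ x ∈ S, ∀ t ∈ J, |u x t| ≤ M ∧
    ∀ i : Fin N, |sderiv (fun y => u y t) x (EuclideanSpace.single i 1)| ≤ M) ∧
  ∀ x ∈ S, ∀ t ∈ J, ∀ y ∈ S, ∀ s ∈ J, ∀ i : Fin N,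
    |sderiv (fun z => u z t) x (EuclideanSpace.single i 1)
      - sderiv (fun z => u z s) y (EuclideanSpace.single i 1)|
      ≤ M * (‖x - y‖ ^ α + |t - s| ^ (α / 2))

/-- Parabolic Hölder bound `|u|_{2+α;S×J} ≤ M`. -/
def HolderBound2 (α : ℝ) (u : Euc N → ℝ → ℝ) (S : Set (Euc N)) (J : Set ℝ) (M : ℝ) : Prop :=
  (∀ x ∈ S, ∀ t ∈ J,
    |u x t| ≤ M ∧
    (∀ i : Fin N, |sderiv (fun y => u y t) x (EuclideanSpace.single i 1)| ≤ M) ∧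
    (∀ i j : Fin N,
      |sderiv2 (fun y => u y t) x (EuclideanSpace.single i 1) (EuclideanSpace.single j 1)| ≤ M) ∧
    |tderiv u x t| ≤ M) ∧
  ∀ x ∈ S, ∀ t ∈ J, ∀ y ∈ S, ∀ s ∈ J,
    (∀ i j : Fin N,
      |sderiv2 (fun z => u z t) x (EuclideanSpace.single i 1) (EuclideanSpace.single j 1)
        - sderiv2 (fun z => u z s) y (EuclideanSpace.single i 1) (EuclideanSpace.single j 1)|
        ≤ M * (‖x - y‖ ^ α + |t - s| ^ (α / 2))) ∧
    |tderiv u x t - tderiv u y s| ≤ M * (‖x - y‖ ^ α + |t - s| ^ (α / 2))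

/-- `v^e(x,t) = v(x,t) - v(σ_e x, t)`. -/
def refDiff (v : Euc N → ℝ → ℝ) (e : Euc N) (x : Euc N) (t : ℝ) : ℝ :=
  v x t - v (reflHyp e x) t

/-- The opposite sign convention, `v^e(x,t) = v(σ_e x, t) - v(x,t)`,
used for the second component of a competitive system. -/
def refDiff2 (v : Euc N → ℝ → ℝ) (e : Euc N) (x : Euc N) (t : ℝ) : ℝ :=
  v (reflHyp e x) t - v x t

/-- The unit vector `e₁ = (1,0,…,0)`. -/
def eOne (N : ℕ) (h : 0 < N) : Euc N := EuclideanSpace.single (⟨0, h⟩ : Fin N) 1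

/-- Inward unit normal vector field on `∂B`. -/
def inwardNormalB (A₂ : ℝ) (x : Euc N) : Euc N :=
  if ‖x‖ = A₂ then -(‖x‖⁻¹ • x) else ‖x‖⁻¹ • x

/-- Inward unit normal vector field on `∂B(e)`
(on the flat part `H(e)` it equals `e`, on `∂B` it is the inward normal of `B`). -/
def inwardNormalHalf (A₂ : ℝ) (e x : Euc N) : Euc N :=
  if ⟪x, e⟫ = 0 then e else inwardNormalB A₂ x

/-- The supersolution system (2.2): `(v^e)_t - Δ v^e - c v^e ≥ 0` in `B(e) × [0,1]`,
`v^e = 0` on `∂B(e) × [0,1]`, `v^e ≥ 0` in `B(e) × [0,1]`. -/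
def AntisymSuperSol (A₁ A₂ : ℝ) (e : Euc N) (v c : Euc N → ℝ → ℝ) : Prop :=
  (∀ x ∈ halfB N A₁ A₂ e, ∀ t ∈ Icc (0:ℝ) 1,
    0 ≤ tderiv (refDiff v e) x t - lapl (fun y => refDiff v e y t) x
      - c x t * refDiff v e x t) ∧
  (∀ x ∈ frontier (halfB N A₁ A₂ e), ∀ t ∈ Icc (0:ℝ) 1, refDiff v e x t = 0) ∧
  (∀ x ∈ halfB N A₁ A₂ e, ∀ t ∈ Icc (0:ℝ) 1, 0 ≤ refDiff v e x t)

/-- Hypothesis `(H_{α,β₀})`: `|v|_{2+α;B×I} + ‖c‖_{L∞(B(e)×I)} ≤ β₀` with `I = [0,1]`. -/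
def HypAB (A₁ A₂ α β₀ : ℝ) (e : Euc N) (v c : Euc N → ℝ → ℝ) : Prop :=
  ∃ M₁ M₂ : ℝ, 0 ≤ M₁ ∧ 0 ≤ M₂ ∧ M₁ + M₂ ≤ β₀ ∧
    HolderBound2 α v (domB N A₁ A₂) (Icc 0 1) M₁ ∧
    ∀ x ∈ halfB N A₁ A₂ e, ∀ t ∈ Icc (0:ℝ) 1, |c x t| ≤ M₂

/-- Hypothesis `(H_k)`: `‖v^e‖_{L∞(B(e)×(1/7,4/7))} ≥ k`. -/
def HypK (A₁ A₂ k : ℝ) (e : Euc N) (v : Euc N → ℝ → ℝ) : Prop :=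
  k ≤ supAbs (fun p : Euc N × ℝ => refDiff v e p.1 p.2)
    ((halfB N A₁ A₂ e) ×ˢ Ioo (1/7 : ℝ) (4/7))

/-- `z` is radially symmetric on `S`. -/
def RadiallySymmetric (S : Set (Euc N)) (z : Euc N → ℝ) : Prop :=
  ∀ x ∈ S, ∀ y ∈ S, ‖x‖ = ‖y‖ → z x = z y

/-- `lam` is a Dirichlet eigenvalue of `-Δ` on `B`. -/
def IsDirichletEigenvalue (B : Set (Euc N)) (lam : ℝ) : Prop :=
  ∃ φ : Euc N → ℝ, ContinuousOn φ (closure B) ∧ (∃ x ∈ B, φ x ≠ 0) ∧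
    (∀ x ∈ B, DifferentiableAt ℝ φ x ∧
      ∀ v, DifferentiableAt ℝ (fun y => fderiv ℝ φ y v) x) ∧
    (∀ x ∈ B, - lapl φ x = lam * φ x) ∧
    (∀ x ∈ frontier B, φ x = 0)

/-- The first Dirichlet eigenvalue `λ₁` of `-Δ` on `B`. -/
def lambdaOne (B : Set (Euc N)) : ℝ := sInf {lam | IsDirichletEigenvalue B lam}

/-- `z` is a positive classical solution of `-Δ z = g(z)` in `B` with zero
Dirichlet boundary values. -/
def IsPosDirichletSol (B : Set (Euc N)) (g : ℝ → ℝ) (z : Euc N → ℝ) : Prop :=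
  ContinuousOn z (closure B) ∧ (∀ x ∈ B, 0 < z x) ∧
  (∀ x ∈ B, DifferentiableAt ℝ z x ∧
    ∀ v, DifferentiableAt ℝ (fun y => fderiv ℝ z y v) x) ∧
  (∀ x ∈ B, - lapl z x = g (z x)) ∧
  (∀ x ∈ frontier B, z x = 0)

/-- `Ω` has smooth boundary: near every boundary point, `Ω` is the sublevel set
of a smooth defining function with nonvanishing differential. -/
def SmoothBoundary (Ω : Set (Euc N)) : Prop :=
  ∀ x ∈ frontier Ω, ∃ f : Euc N → ℝ, ContDiff ℝ (⊤ : ℕ∞) f ∧ f x = 0 ∧ fderiv ℝ f x ≠ 0 ∧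
    ∃ ε > 0, ∀ y ∈ ball x ε, (y ∈ Ω ↔ f y < 0)

/-- `u = (u₁,u₂)` is a classical solution of system (1.1) with data `f₁,f₂,α₁,α₂`
and initial values `u01, u02`. -/
def SolSys (N : ℕ) (A₁ A₂ : ℝ) (f₁ f₂ : ℝ → ℝ → ℝ → ℝ) (α₁ α₂ : ℝ → ℝ → ℝ)
    (u₁ u₂ : Euc N → ℝ → ℝ) (u01 u02 : Euc N → ℝ) : Prop :=
  (∀ x ∈ domB N A₁ A₂, ∀ t > (0:ℝ),
    tderiv u₁ x t - lapl (fun y => u₁ y t) x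
      = f₁ t ‖x‖ (u₁ x t) - α₁ ‖x‖ t * (u₁ x t * u₂ x t)) ∧
  (∀ x ∈ domB N A₁ A₂, ∀ t > (0:ℝ),
    tderiv u₂ x t - lapl (fun y => u₂ y t) x
      = f₂ t ‖x‖ (u₂ x t) - α₂ ‖x‖ t * (u₁ x t * u₂ x t)) ∧
  (∀ x ∈ frontier (domB N A₁ A₂), ∀ t > (0:ℝ), u₁ x t = 0 ∧ u₂ x t = 0) ∧
  (∀ x ∈ closure (domB N A₁ A₂), u₁ x 0 = u01 x ∧ u₂ x 0 = u02 x)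

/-- Regularity class of a classical solution:
`C^{2,1}(B̄ × (0,∞)) ∩ C(B̄ × [0,∞))`. -/
def ClassicalReg (N : ℕ) (A₁ A₂ : ℝ) (u : Euc N → ℝ → ℝ) : Prop :=
  IsC21 u (closure (domB N A₁ A₂)) (Ioi 0) ∧
  ContinuousOn (fun p : Euc N × ℝ => u p.1 p.2) (closure (domB N A₁ A₂) ×ˢ Ici 0)

/-- Hypothesis (h1) for a nonlinearity `f` with derivative `∂_v f = f'`. -/
def Hyp1 (N : ℕ) (A₁ A₂ : ℝ) (f f' : ℝ → ℝ → ℝ → ℝ) (γ : ℝ) : Prop :=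
  (∀ t > (0:ℝ), ∀ r ∈ Icc A₁ A₂, ∀ v ≥ (0:ℝ), HasDerivAt (f t r) (f' t r v) v) ∧
  (∀ t > (0:ℝ), ∀ r ∈ Icc A₁ A₂, ContinuousOn (f' t r) (Ici 0)) ∧
  (∀ h ∈ ({f, f'} : Set (ℝ → ℝ → ℝ → ℝ)),
    (∀ v ≥ (0:ℝ), ∃ M, HolderBound0 γ (fun (x : Euc N) (t : ℝ) => h t ‖x‖ v)
      (domB N A₁ A₂) (Ioi 0) M) ∧
    (∀ R > (0:ℝ), ∃ L, ∀ t > (0:ℝ), ∀ r ∈ Icc A₁ A₂, ∀ v ∈ Icc (0:ℝ) R, ∀ w ∈ Icc (0:ℝ) R,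
      |h t r v - h t r w| ≤ L * |v - w|)) ∧
  (∀ t > (0:ℝ), ∀ r ∈ Icc A₁ A₂, f t r 0 = 0)

/-- Hypothesis (h2) for a coefficient `α = α(r,t)` with bounds `αl ≤ α ≤ αu`
and Hölder exponent `β`. -/
def Hyp2 (A₁ A₂ : ℝ) (α : ℝ → ℝ → ℝ) (αl αu β : ℝ) : Prop :=
  (∀ r ∈ Icc A₁ A₂, ∀ t > (0:ℝ), αl ≤ α r t ∧ α r t ≤ αu) ∧
  ∃ M, ∀ r ∈ Icc A₁ A₂, ∀ t > (0:ℝ), ∀ r' ∈ Icc A₁ A₂, ∀ t' > (0:ℝ),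
    |α r t - α r' t'| ≤ M * (|r - r'| ^ β + |t - t'| ^ (β / 2))


/-- The weakly coupled linear supersolution system (2.10)–(2.11) for the pair
`(v₁^e, v₂^e)` on `B(e) × [0,1]`, including the sign conditions on `c₁₂, c₂₁`. -/
def SysSuperSol (A₁ A₂ : ℝ) (e : Euc N) (v₁ v₂ c11 c12 c21 c22 : Euc N → ℝ → ℝ) : Prop :=
  (∀ x ∈ halfB N A₁ A₂ e, ∀ t ∈ Icc (0:ℝ) 1,
    0 ≤ tderiv (refDiff v₁ e) x t - lapl (fun y => refDiff v₁ e y t) x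
      - c11 x t * refDiff v₁ e x t - c12 x t * refDiff2 v₂ e x t) ∧
  (∀ x ∈ halfB N A₁ A₂ e, ∀ t ∈ Icc (0:ℝ) 1,
    0 ≤ tderiv (refDiff2 v₂ e) x t - lapl (fun y => refDiff2 v₂ e y t) x
      - c21 x t * refDiff v₁ e x t - c22 x t * refDiff2 v₂ e x t) ∧
  (∀ x ∈ frontier (halfB N A₁ A₂ e), ∀ t ∈ Icc (0:ℝ) 1,
    refDiff v₁ e x t = 0 ∧ refDiff2 v₂ e x t = 0) ∧
  (∀ x ∈ halfB N A₁ A₂ e, ∀ t ∈ Icc (0:ℝ) 1,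
    0 ≤ refDiff v₁ e x t ∧ 0 ≤ refDiff2 v₂ e x t) ∧
  (∀ x ∈ halfB N A₁ A₂ e, ∀ t ∈ Icc (0:ℝ) 1, 0 ≤ c12 x t ∧ 0 ≤ c21 x t)

/-- Auxiliary: first-derivative interpolation via the mean value theorem. -/
lemma s8_interp1 (g g' : ℝ → ℝ) (t₀ h σ E : ℝ) (hh : 0 < h)
    (hdiff : ∀ t ∈ Icc t₀ (t₀+h), HasDerivAt g (g' t) t)
    (hbd : ∀ t ∈ Icc t₀ (t₀+h), |g t| ≤ σ)
    (hHold : ∀ t ∈ Icc t₀ (t₀+h), |g' t - g' t₀| ≤ E) :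
    |g' t₀| ≤ 2*σ/h + E := by
  have hlt : t₀ < t₀ + h := by linarith
  obtain ⟨c, hc, hcs⟩ := exists_hasDerivAt_eq_slope g g' hlt
    (fun t ht => (hdiff t ht).continuousAt.continuousWithinAt)
    (fun t ht => hdiff t (Ioo_subset_Icc_self ht))
  have hcI : c ∈ Icc t₀ (t₀+h) := Ioo_subset_Icc_self hc
  have h1 : |g' c| ≤ 2*σ/h := by
    rw [hcs, add_sub_cancel_left, abs_div, abs_of_pos hh]
    have b1 := hbd _ (left_mem_Icc.2 hlt.le)
    have b2 := hbd _ (right_mem_Icc.2 hlt.le)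
    have : |g (t₀+h) - g t₀| ≤ 2*σ := by
      calc |g (t₀+h) - g t₀| ≤ |g (t₀+h)| + |g t₀| := abs_sub _ _
        _ ≤ 2*σ := by linarith
    exact div_le_div_of_nonneg_right this hh.le
  have h2 := hHold c hcI
  calc |g' t₀| = |g' c + (g' t₀ - g' c)| := by ring_nf
    _ ≤ |g' c| + |g' t₀ - g' c| := abs_add_le _ _
    _ = |g' c| + |g' c - g' t₀| := by rw [abs_sub_comm]
    _ ≤ 2*σ/h + E := add_le_add h1 h2

/-- Auxiliary: second-derivative interpolation via the mean value theorem. -/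
lemma s8_interp2 (φ φ' φ'' : ℝ → ℝ) (h σ E : ℝ) (hh : 0 < h)
    (hd1 : ∀ s ∈ Icc (-h) h, HasDerivAt φ (φ' s) s)
    (hd2 : ∀ s ∈ Icc (-h) h, HasDerivAt φ' (φ'' s) s)
    (hbd : ∀ s ∈ Icc (-h) h, |φ s| ≤ σ)
    (hHold : ∀ s ∈ Icc (-h) h, |φ'' s - φ'' 0| ≤ E) :
    |φ'' 0| ≤ 4*σ/h^2 + 2*E := by
  set ψ : ℝ → ℝ := fun s => φ s - φ 0 - s * φ' 0 - s^2/2 * φ'' 0 with hψ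
  set ψ' : ℝ → ℝ := fun s => φ' s - φ' 0 - s * φ'' 0 with hψ'
  have hsub : ∀ a b : ℝ, -h ≤ a → b ≤ h → Icc a b ⊆ Icc (-h) h :=
    fun a b ha hb => Icc_subset_Icc ha hb
  have hdψ : ∀ s ∈ Icc (-h) h, HasDerivAt ψ (ψ' s) s := by
    intro s hs
    have h1 : HasDerivAt (fun s : ℝ => s * φ' 0) (φ' 0) s := by
      simpa using (hasDerivAt_id s).mul_const (φ' 0)
    have h2 : HasDerivAt (fun s : ℝ => s^2/2 * φ'' 0) (s * φ'' 0) s := by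
      have := ((hasDerivAt_pow 2 s).div_const 2).mul_const (φ'' 0)
      refine this.congr_deriv ?_
      norm_num
    exact (((hd1 s hs).sub_const (φ 0)).sub h1).sub h2
  have hdψ' : ∀ s ∈ Icc (-h) h, HasDerivAt ψ' (φ'' s - φ'' 0) s := by
    intro s hs
    have h1 : HasDerivAt (fun s : ℝ => s * φ'' 0) (φ'' 0) s := by
      simpa using (hasDerivAt_id s).mul_const (φ'' 0)
    exact (((hd2 s hs).sub_const (φ' 0)).sub h1)
  have hψ0 : ψ 0 = 0 := by simp [hψ]
  have hψ'0 : ψ' 0 = 0 := by simp [hψ']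
  have hE : 0 ≤ E := le_trans (abs_nonneg _) (hHold 0 ⟨by linarith, by linarith⟩)
  have kh : |ψ h| ≤ h^2 * E := by
    obtain ⟨η, hη, hηs⟩ := exists_hasDerivAt_eq_slope ψ ψ' hh
      (fun t ht => (hdψ t (hsub 0 h (by linarith) le_rfl ht)).continuousAt.continuousWithinAt)
      (fun t ht => hdψ t (hsub 0 h (by linarith) le_rfl (Ioo_subset_Icc_self ht)))
    have hη0 : 0 < η := hη.1
    obtain ⟨ξ, hξ, hξs⟩ := exists_hasDerivAt_eq_slope ψ' (fun s => φ'' s - φ'' 0) hη0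
      (fun t ht => (hdψ' t (hsub 0 η (by linarith) (by linarith [hη.2]) ht)).continuousAt.continuousWithinAt)
      (fun t ht => hdψ' t (hsub 0 η (by linarith) (by linarith [hη.2]) (Ioo_subset_Icc_self ht)))
    have hξI : ξ ∈ Icc (-h) h := ⟨by linarith [hξ.1], by linarith [hξ.2, hη.2]⟩
    have e1 : ψ' η = η * (φ'' ξ - φ'' 0) := by
      rw [hξs, hψ'0]
      simp only [sub_zero]
      field_simp
    have e2 : ψ h = h * ψ' η := by
      rw [hηs, hψ0]
      simp only [sub_zero]
      field_simp
    rw [e2, e1, abs_mul, abs_mul, abs_of_pos hh, abs_of_pos hη0]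
    have hb := hHold ξ hξI
    have hηh : η ≤ h := hη.2.le
    calc h * (η * |φ'' ξ - φ'' 0|) ≤ h * (h * E) := by
          apply mul_le_mul_of_nonneg_left _ hh.le
          exact mul_le_mul hηh hb (abs_nonneg _) hh.le
      _ = h^2 * E := by ring
  have kmh : |ψ (-h)| ≤ h^2 * E := by
    have hlt : -h < 0 := by linarith
    obtain ⟨η, hη, hηs⟩ := exists_hasDerivAt_eq_slope ψ ψ' hlt
      (fun t ht => (hdψ t (hsub (-h) 0 le_rfl (by linarith) ht)).continuousAt.continuousWithinAt)
      (fun t ht => hdψ t (hsub (-h) 0 le_rfl (by linarith) (Ioo_subset_Icc_self ht)))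
    have hη0 : η < 0 := hη.2
    obtain ⟨ξ, hξ, hξs⟩ := exists_hasDerivAt_eq_slope ψ' (fun s => φ'' s - φ'' 0) hη0
      (fun t ht => (hdψ' t (hsub η 0 (by linarith [hη.1]) (by linarith) ht)).continuousAt.continuousWithinAt)
      (fun t ht => hdψ' t (hsub η 0 (by linarith [hη.1]) (by linarith) (Ioo_subset_Icc_self ht)))
    have hξI : ξ ∈ Icc (-h) h := ⟨by linarith [hξ.1, hη.1], by linarith [hξ.2]⟩
    have hηne : η ≠ 0 := hη0.ne
    have e1 : ψ' η = η * (φ'' ξ - φ'' 0) := by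
      rw [hξs, hψ'0]
      field_simp
      ring
    have e2 : ψ (-h) = -(h * ψ' η) := by
      rw [hηs, hψ0]
      have hh0 : h ≠ 0 := hh.ne'
      simp only [zero_sub, sub_neg_eq_add, zero_add]
      field_simp
    rw [e2, abs_neg, e1, abs_mul, abs_mul, abs_of_pos hh, abs_of_neg hη0]
    have hb := hHold ξ hξI
    have hηh : -η ≤ h := by linarith [hη.1]
    calc h * (-η * |φ'' ξ - φ'' 0|) ≤ h * (h * E) := by
          apply mul_le_mul_of_nonneg_left _ hh.le
          exact mul_le_mul hηh hb (abs_nonneg _) hh.le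
      _ = h^2 * E := by ring
  have bh := hbd h ⟨by linarith, le_rfl⟩
  have bmh := hbd (-h) ⟨le_rfl, by linarith⟩
  have b0 := hbd 0 ⟨by linarith, by linarith⟩
  have expand : ψ h + ψ (-h) = φ h + φ (-h) - 2 * φ 0 - h^2 * φ'' 0 := by
    simp only [hψ]; ring
  have habs : h^2 * |φ'' 0| ≤ 2*(h^2*E) + 4*σ := by
    have heq : h^2 * φ'' 0 = (φ h + φ (-h) - 2*φ 0) - (ψ h + ψ (-h)) := by
      rw [expand]; ring
    have h1 : |h^2 * φ'' 0| ≤ |φ h| + |φ (-h)| + 2*|φ 0| + (|ψ h| + |ψ (-h)|) := by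
      rw [heq]
      have t1 : |φ h + φ (-h) - 2*φ 0 - (ψ h + ψ (-h))|
          ≤ |φ h + φ (-h) - 2*φ 0| + |ψ h + ψ (-h)| := abs_sub _ _
      have t2 : |φ h + φ (-h) - 2*φ 0| ≤ |φ h + φ (-h)| + |2*φ 0| := abs_sub _ _
      have t3 : |φ h + φ (-h)| ≤ |φ h| + |φ (-h)| := abs_add_le _ _
      have t4 : |ψ h + ψ (-h)| ≤ |ψ h| + |ψ (-h)| := abs_add_le _ _
      have t5 : |2*φ 0| = 2*|φ 0| := by rw [abs_mul]; norm_num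
      linarith
    rw [abs_mul, abs_of_pos (by positivity : (0:ℝ) < h^2)] at h1
    linarith
  have hh2 : (0:ℝ) < h^2 := by positivity
  by_contra hc
  push_neg at hc
  have hmul := mul_lt_mul_of_pos_left hc hh2
  have key2 : h^2*(4*σ/h^2) = 4*σ := by field_simp
  nlinarith [hmul, key2, habs]

/-- The reflection as a continuous linear map. -/
def s8_R (e : Euc N) : Euc N →L[ℝ] Euc N :=
  ContinuousLinearMap.id ℝ (Euc N) - (2:ℝ) • ((innerSL ℝ e).smulRight e)

lemma s8_R_apply (e x : Euc N) : s8_R e x = reflHyp e x := by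
  simp only [s8_R, reflHyp, ContinuousLinearMap.sub_apply, ContinuousLinearMap.smul_apply,
    ContinuousLinearMap.id_apply, ContinuousLinearMap.smulRight_apply, innerSL_apply_apply]
  rw [real_inner_comm]
  module

lemma s8_norm_reflHyp (e : Euc N) (he : ‖e‖ = 1) (x : Euc N) : ‖reflHyp e x‖ = ‖x‖ := by
  have h2 : ‖reflHyp e x‖^2 = ‖x‖^2 := by
    rw [reflHyp, norm_sub_sq_real, real_inner_smul_right, norm_smul]
    rw [mul_pow, he]
    simp only [one_pow, mul_one]
    rw [Real.norm_eq_abs, sq_abs]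
    ring
  nlinarith [norm_nonneg (reflHyp e x), norm_nonneg x, h2]

lemma s8_ball_subset {S : Set (Euc N)} {x₀ : Euc N} {δ : ℝ} (hx : x₀ ∈ S)
    (hne : S ≠ Set.univ) (hd : δ < Metric.infDist x₀ (frontier S)) :
    Metric.ball x₀ δ ⊆ S := by
  intro y hy
  by_contra hyn
  obtain ⟨z, hz, hzd⟩ := exists_mem_frontier_infDist_compl_eq_dist hx hne
  have h1 : Metric.infDist x₀ Sᶜ ≤ dist x₀ y := Metric.infDist_le_dist_of_mem hyn
  have h2 : Metric.infDist x₀ (frontier S) ≤ dist x₀ z := Metric.infDist_le_dist_of_mem hz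
  rw [← hzd] at h2
  have h3 : dist x₀ y < δ := by rwa [Metric.mem_ball, dist_comm] at hy
  linarith


set_option maxHeartbeats 2000000 in
/-- Proposition 2.7(i) — a quantitative lower bound on
`‖v₁^{e₁}‖_{L∞(Q)}` in terms of `‖v₂^{e₁}‖_{L∞(Q_δ)}` and `inf_{Q_δ} c₁₂`. -/
theorem statement8
    (N : ℕ) (hN : 2 ≤ N) (A₁ A₂ : ℝ) (hA₁ : 0 ≤ A₁) (hA : A₁ < A₂)
    (e₁ : Euc N) (he₁ : e₁ = eOne N (by omega))
    (γ M : ℝ) (hγ : 0 < γ ∧ γ < 1) (hM : 0 < M)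
    (δ ε₁ : ℝ) (hδ : 0 < δ) (hε₁ : 0 < ε₁) :
    ∃ σ > (0:ℝ), ∀ v₁ v₂ c11 c12 c21 c22 : Euc N → ℝ → ℝ,
      IsC21 v₁ (closure (domB N A₁ A₂)) (Icc 0 1) →
      IsC21 v₂ (closure (domB N A₁ A₂)) (Icc 0 1) →
      (∃ M' < M, 0 ≤ M' ∧ HolderBound2 γ v₁ (domB N A₁ A₂) (Icc 0 1) M' ∧
        HolderBound2 γ v₂ (domB N A₁ A₂) (Icc 0 1) M') →
      (∃ m11 m12 m21 m22 : ℝ, 0 ≤ m11 ∧ 0 ≤ m12 ∧ 0 ≤ m21 ∧ 0 ≤ m22 ∧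
        m11 + m12 + m21 + m22 < M ∧
        ∀ x ∈ halfB N A₁ A₂ e₁, ∀ t ∈ Icc (0:ℝ) 1,
          |c11 x t| ≤ m11 ∧ |c12 x t| ≤ m12 ∧ |c21 x t| ≤ m21 ∧ |c22 x t| ≤ m22) →
      SysSuperSol A₁ A₂ e₁ v₁ v₂ c11 c12 c21 c22 →
      ε₁ < supAbs (fun p : Euc N × ℝ => refDiff2 v₂ e₁ p.1 p.2)
        ({x ∈ halfB N A₁ A₂ e₁ | δ < infDist x (frontier (halfB N A₁ A₂ e₁))}
          ×ˢ Icc (2/7 : ℝ) (3/7)) →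
      ε₁ < sInf ((fun p : Euc N × ℝ => c12 p.1 p.2) ''
        ({x ∈ halfB N A₁ A₂ e₁ | δ < infDist x (frontier (halfB N A₁ A₂ e₁))}
          ×ˢ Icc (2/7 : ℝ) (3/7))) →
      σ < supAbs (fun p : Euc N × ℝ => refDiff v₁ e₁ p.1 p.2)
        ((halfB N A₁ A₂ e₁) ×ˢ Icc (1/7 : ℝ) (4/7)) := by
  obtain ⟨hγ0, hγ1⟩ := hγ
  have hNR : (2:ℝ) ≤ (N:ℝ) := by exact_mod_cast hN
  have hNpos : (0:ℝ) < (N:ℝ) := by linarith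
  -- the unit vector and basic facts
  have hi0 : (0:ℕ) < N := by omega
  have hne1 : ‖e₁‖ = 1 := by
    rw [he₁, eOne, EuclideanSpace.norm_single]; norm_num
  -- choice of h
  have ha1 : (0:ℝ) < ε₁^2/(8*M) := by
    apply div_pos (by positivity) (by linarith)
  have ha2 : (0:ℝ) < ε₁^2/(16*N*M) := by
    apply div_pos (by positivity)
    have : (0:ℝ) < 16*N := by linarith
    nlinarith
  set a1 : ℝ := ε₁^2/(8*M) with ha1d
  set a2 : ℝ := ε₁^2/(16*N*M) with ha2d
  set h : ℝ := min (min (δ/2) (1/7)) (min (a1 ^ ((2:ℝ)/γ)) (a2 ^ ((1:ℝ)/γ))) with hhd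
  have hhpos : 0 < h := by
    apply lt_min (lt_min (by linarith) (by norm_num))
    exact lt_min (Real.rpow_pos_of_pos ha1 _) (Real.rpow_pos_of_pos ha2 _)
  have hhδ : h ≤ δ/2 := le_trans (min_le_left _ _) (min_le_left _ _)
  have hh7 : h ≤ 1/7 := le_trans (min_le_left _ _) (min_le_right _ _)
  have hha1 : h ≤ a1 ^ ((2:ℝ)/γ) := le_trans (min_le_right _ _) (min_le_left _ _)
  have hha2 : h ≤ a2 ^ ((1:ℝ)/γ) := le_trans (min_le_right _ _) (min_le_right _ _)
  -- rpow estimates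
  have hpow1 : h ^ (γ/2) ≤ a1 := by
    calc h ^ (γ/2) ≤ (a1 ^ ((2:ℝ)/γ)) ^ (γ/2) :=
          Real.rpow_le_rpow hhpos.le hha1 (by positivity)
      _ = a1 ^ (((2:ℝ)/γ) * (γ/2)) := (Real.rpow_mul ha1.le _ _).symm
      _ = a1 ^ (1:ℝ) := by
          congr 1
          field_simp
      _ = a1 := Real.rpow_one _
  have hpow2 : h ^ γ ≤ a2 := by
    calc h ^ γ ≤ (a2 ^ ((1:ℝ)/γ)) ^ γ :=
          Real.rpow_le_rpow hhpos.le hha2 (by positivity)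
      _ = a2 ^ (((1:ℝ)/γ) * γ) := (Real.rpow_mul ha2.le _ _).symm
      _ = a2 ^ (1:ℝ) := by
          congr 1
          field_simp
      _ = a2 := Real.rpow_one _
  set D : ℝ := 2/h + 4*N/h^2 + M with hDd
  have hD : 0 < D := by
    have : (0:ℝ) < 2/h := by positivity
    have : (0:ℝ) < 4*N/h^2 := by positivity
    have hD0 : (0:ℝ) < 2/h + 4*N/h^2 + M := by positivity
    exact hD0
  refine ⟨ε₁^2/(4*D), by positivity, ?_⟩
  set σv : ℝ := ε₁^2/(4*D) with hσd
  have hσpos : 0 < σv := by positivity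
  intro v₁ v₂ c11 c12 c21 c22 hreg1 hreg2 hHol hcoef hsys hv2 hc12inf
  by_contra hcon
  push_neg at hcon
  obtain ⟨M', hM'M, hM'0, hHv1, hHv2⟩ := hHol
  obtain ⟨m11, m12, m21, m22, hm11, hm12, hm21, hm22, hmsum, hmbnd⟩ := hcoef
  -- basic set facts
  have hhalfdom : halfB N A₁ A₂ e₁ ⊆ domB N A₁ A₂ := fun x hx => hx.1
  have hRdom : ∀ x ∈ domB N A₁ A₂, reflHyp e₁ x ∈ domB N A₁ A₂ := by
    intro x hx
    have hn := s8_norm_reflHyp e₁ hne1 x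
    exact ⟨by rw [hn]; exact hx.1, by rw [hn]; exact hx.2⟩
  -- locate the point (x₀, t₀)
  set S₂ : Set (Euc N × ℝ) :=
    ({x ∈ halfB N A₁ A₂ e₁ | δ < infDist x (frontier (halfB N A₁ A₂ e₁))}
      ×ˢ Icc (2/7 : ℝ) (3/7)) with hS₂d
  have hS₂ne : ((fun p : Euc N × ℝ => |refDiff2 v₂ e₁ p.1 p.2|) '' S₂).Nonempty := by
    by_contra hemp
    rw [Set.not_nonempty_iff_eq_empty] at hemp
    rw [supAbs, hemp, Real.sSup_empty] at hv2
    linarith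
  obtain ⟨b, hbmem, hbgt⟩ := exists_lt_of_lt_csSup hS₂ne hv2
  obtain ⟨⟨x₀, t₀⟩, hmem, rfl⟩ := hbmem
  have hx₀Q : x₀ ∈ {x ∈ halfB N A₁ A₂ e₁ | δ < infDist x (frontier (halfB N A₁ A₂ e₁))} :=
    hmem.1
  have ht₀Q : t₀ ∈ Icc (2/7 : ℝ) (3/7) := hmem.2
  have hx₀half : x₀ ∈ halfB N A₁ A₂ e₁ := hx₀Q.1
  have hx₀dom : x₀ ∈ domB N A₁ A₂ := hhalfdom hx₀half
  have ht₀01 : t₀ ∈ Icc (0:ℝ) 1 := ⟨by linarith [ht₀Q.1], by linarith [ht₀Q.2]⟩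
  have ht₀17 : t₀ ∈ Icc (1/7:ℝ) (4/7) := ⟨by linarith [ht₀Q.1], by linarith [ht₀Q.2]⟩
  -- v₂ difference is > ε₁ at (x₀,t₀)
  have hw2nn := (hsys.2.2.2.1 x₀ hx₀half t₀ ht₀01).2
  have hw2 : ε₁ < refDiff2 v₂ e₁ x₀ t₀ := by
    simp only at hbgt
    rwa [abs_of_nonneg hw2nn] at hbgt
  -- c12 > ε₁ at (x₀,t₀)
  have hc12pt : ε₁ < c12 x₀ t₀ := by
    refine lt_of_lt_of_le hc12inf (csInf_le ⟨0, ?_⟩ ⟨(x₀,t₀), hmem, rfl⟩)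
    rintro r ⟨⟨x, t⟩, hxt, rfl⟩
    exact (hsys.2.2.2.2 x hxt.1.1 t ⟨by linarith [hxt.2.1], by linarith [hxt.2.2]⟩).1
  -- ball around x₀
  have hneu : halfB N A₁ A₂ e₁ ≠ Set.univ := by
    intro hu
    have h0 : (0 : Euc N) ∈ halfB N A₁ A₂ e₁ := hu ▸ Set.mem_univ _
    have := h0.2
    simp [inner_zero_left] at this
  have hballhalf : Metric.ball x₀ δ ⊆ halfB N A₁ A₂ e₁ :=
    s8_ball_subset hx₀half hneu hx₀Q.2
  have hballdom : Metric.ball x₀ δ ⊆ domB N A₁ A₂ := fun y hy => hhalfdom (hballhalf hy)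
  -- pointwise smallness of refDiff v₁
  have hptw : ∀ x ∈ halfB N A₁ A₂ e₁, ∀ t ∈ Icc (1/7:ℝ) (4/7), |refDiff v₁ e₁ x t| ≤ σv := by
    intro x hx t ht
    have htI : t ∈ Icc (0:ℝ) 1 := ⟨by linarith [ht.1], by linarith [ht.2]⟩
    have hbdd : BddAbove ((fun p : Euc N × ℝ => |refDiff v₁ e₁ p.1 p.2|) ''
        ((halfB N A₁ A₂ e₁) ×ˢ Icc (1/7 : ℝ) (4/7))) := by
      refine ⟨2*M', ?_⟩
      rintro r ⟨⟨y, s⟩, ⟨hy, hs⟩, rfl⟩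
      have hsI : s ∈ Icc (0:ℝ) 1 := ⟨by linarith [hs.1], by linarith [hs.2]⟩
      have b1 := (hHv1.1 y (hhalfdom hy) s hsI).1
      have b2 := (hHv1.1 (reflHyp e₁ y) (hRdom y (hhalfdom hy)) s hsI).1
      have : |refDiff v₁ e₁ y s| ≤ |v₁ y s| + |v₁ (reflHyp e₁ y) s| := abs_sub _ _
      simp only
      linarith
    have hmem' : |refDiff v₁ e₁ x t| ∈ (fun p : Euc N × ℝ => |refDiff v₁ e₁ p.1 p.2|) ''
        ((halfB N A₁ A₂ e₁) ×ˢ Icc (1/7 : ℝ) (4/7)) := ⟨(x,t), ⟨hx, ht⟩, rfl⟩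
    have := le_csSup hbdd hmem'
    calc |refDiff v₁ e₁ x t| ≤ supAbs (fun p : Euc N × ℝ => refDiff v₁ e₁ p.1 p.2)
          ((halfB N A₁ A₂ e₁) ×ˢ Icc (1/7 : ℝ) (4/7)) := this
      _ ≤ σv := hcon
  -- TIME DERIVATIVE BOUND
  set p₀ : Euc N := reflHyp e₁ x₀ with hp₀d
  have hp₀dom : p₀ ∈ domB N A₁ A₂ := hRdom x₀ hx₀dom
  set G : ℝ → ℝ := fun t => tderiv v₁ x₀ t - tderiv v₁ p₀ t with hGd
  have hg : ∀ t ∈ Icc t₀ (t₀+h), HasDerivAt (refDiff v₁ e₁ x₀) (G t) t := by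
    intro t ht
    have htI : t ∈ Icc (0:ℝ) 1 :=
      ⟨by linarith [ht.1, ht₀Q.1], by linarith [ht.2, ht₀Q.2, hh7]⟩
    have d1 := (hreg1.diffTime x₀ (subset_closure hx₀dom) t htI).hasDerivAt
    have d2 := (hreg1.diffTime p₀ (subset_closure hp₀dom) t htI).hasDerivAt
    exact d1.sub d2
  have hTbd : |tderiv (refDiff v₁ e₁) x₀ t₀| ≤ 2*σv/h + 2*M*h^(γ/2) := by
    have hib : ∀ t ∈ Icc t₀ (t₀+h), |refDiff v₁ e₁ x₀ t| ≤ σv := by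
      intro t ht
      exact hptw x₀ hx₀half t
        ⟨by linarith [ht.1, ht₀Q.1], by linarith [ht.2, ht₀Q.2, hh7]⟩
    have hiH : ∀ t ∈ Icc t₀ (t₀+h), |G t - G t₀| ≤ 2*M*h^(γ/2) := by
      intro t ht
      have htI : t ∈ Icc (0:ℝ) 1 :=
        ⟨by linarith [ht.1, ht₀Q.1], by linarith [ht.2, ht₀Q.2, hh7]⟩
      have habs : |t - t₀| ≤ h := by
        rw [abs_of_nonneg (by linarith [ht.1])]
        linarith [ht.2]
      have hrp : |t - t₀| ^ (γ/2) ≤ h ^ (γ/2) :=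
        Real.rpow_le_rpow (abs_nonneg _) habs (by positivity)
      have k1 := (hHv1.2 x₀ hx₀dom t htI x₀ hx₀dom t₀ ht₀01).2
      have k2 := (hHv1.2 p₀ hp₀dom t htI p₀ hp₀dom t₀ ht₀01).2
      rw [sub_self, norm_zero, Real.zero_rpow hγ0.ne', zero_add] at k1 k2
      have hMle : M' * |t - t₀| ^ (γ/2) ≤ M * h ^ (γ/2) :=
        mul_le_mul hM'M.le hrp (Real.rpow_nonneg (abs_nonneg _) _) (by linarith)
      have : |G t - G t₀| ≤ |tderiv v₁ x₀ t - tderiv v₁ x₀ t₀|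
          + |tderiv v₁ p₀ t - tderiv v₁ p₀ t₀| := by
        have : G t - G t₀ = (tderiv v₁ x₀ t - tderiv v₁ x₀ t₀)
            - (tderiv v₁ p₀ t - tderiv v₁ p₀ t₀) := by simp only [hGd]; ring
        rw [this]
        exact abs_sub _ _
      linarith
    have := s8_interp1 (refDiff v₁ e₁ x₀) G t₀ h σv (2*M*h^(γ/2)) hhpos hg hib hiH
    have hTeq : tderiv (refDiff v₁ e₁) x₀ t₀ = G t₀ :=
      (hg t₀ (left_mem_Icc.2 (by linarith))).deriv
    rwa [hTeq]
  -- SPATIAL DERIVATIVE BOUND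
  set V : Euc N → ℝ := fun z => v₁ z t₀ with hVd
  set R : Euc N →L[ℝ] Euc N := s8_R e₁ with hRd
  set WR : Euc N → ℝ := fun z => V z - V (R z) with hWRd
  have hRRH : ∀ x : Euc N, R x = reflHyp e₁ x := fun x => s8_R_apply e₁ x
  have hWReq : ∀ z : Euc N, WR z = refDiff v₁ e₁ z t₀ := by
    intro z
    simp only [hWRd, hVd, refDiff, hRRH]
  have hRnorm : ∀ a b : Euc N, ‖R a - R b‖ = ‖a - b‖ := by
    intro a b
    rw [← map_sub, hRRH, s8_norm_reflHyp e₁ hne1]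
  have hRdom' : ∀ x ∈ domB N A₁ A₂, R x ∈ domB N A₁ A₂ := by
    intro x hx
    rw [hRRH]
    exact hRdom x hx
  have hWRdiff : ∀ y ∈ domB N A₁ A₂, DifferentiableAt ℝ WR y := by
    intro y hy
    have d1 := hreg1.diffSpace y (subset_closure hy) t₀ ht₀01
    have d2 := hreg1.diffSpace (R y) (subset_closure (hRdom' y hy)) t₀ ht₀01
    exact d1.sub (d2.comp y R.differentiableAt)
  have hlapbd : |lapl WR x₀| ≤ (N:ℝ) * (4*σv/h^2 + 4*M*h^γ) := by
    have key_i : ∀ i : Fin N,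
        |sderiv2 WR x₀ (EuclideanSpace.single i 1) (EuclideanSpace.single i 1)|
          ≤ 4*σv/h^2 + 4*M*h^γ := by
      intro i
      set ei : Euc N := EuclideanSpace.single i 1 with heid
      have hnei : ‖ei‖ = 1 := by
        rw [heid, EuclideanSpace.norm_single]; norm_num
      obtain ⟨ε, hε2, hRei⟩ : ∃ ε : ℝ, ε * ε = 1 ∧ R ei = ε • ei := by
        rw [hRd]
        by_cases hcase : i = (⟨0, hi0⟩ : Fin N)
        · refine ⟨-1, by norm_num, ?_⟩
          simp only [s8_R, ContinuousLinearMap.sub_apply, ContinuousLinearMap.smul_apply,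
            ContinuousLinearMap.id_apply, ContinuousLinearMap.smulRight_apply, innerSL_apply_apply]
          have : ⟪e₁, ei⟫ = 1 := by
            rw [he₁, eOne, heid, hcase, EuclideanSpace.inner_single_left]
            simp [EuclideanSpace.single_apply]
          rw [this, he₁, eOne, heid, hcase]
          module
        · refine ⟨1, by norm_num, ?_⟩
          simp only [s8_R, ContinuousLinearMap.sub_apply, ContinuousLinearMap.smul_apply,
            ContinuousLinearMap.id_apply, ContinuousLinearMap.smulRight_apply, innerSL_apply_apply]
          have : ⟪e₁, ei⟫ = 0 := by
            rw [he₁, eOne, heid, EuclideanSpace.inner_single_left]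
            simp [EuclideanSpace.single_apply]
            intro hc
            exact hcase (by exact hc.symm)
          rw [this]
          module
      set Gi : Euc N → ℝ := fun y => fderiv ℝ V y ei with hGid
      have hGidiff : ∀ x ∈ domB N A₁ A₂, DifferentiableAt ℝ Gi x := by
        intro x hx
        exact hreg1.diffSpace2 ei x (subset_closure hx) t₀ ht₀01
      -- first derivative identity
      have hfd1 : ∀ y ∈ domB N A₁ A₂, fderiv ℝ WR y ei = Gi y - ε * Gi (R y) := by
        intro y hy
        have d1 := hreg1.diffSpace y (subset_closure hy) t₀ ht₀01
        have d2 := hreg1.diffSpace (R y) (subset_closure (hRdom' y hy)) t₀ ht₀01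
        have hcompd : DifferentiableAt ℝ (fun z => V (R z)) y := d2.comp y R.differentiableAt
        have e0 : fderiv ℝ WR y = fderiv ℝ V y - fderiv ℝ (fun z => V (R z)) y :=
          fderiv_sub d1 hcompd
        have e1 : fderiv ℝ (fun z => V (R z)) y = (fderiv ℝ V (R y)).comp (R : Euc N →L[ℝ] Euc N) :=
          (d2.hasFDerivAt.comp y R.hasFDerivAt).fderiv
        rw [e0, e1]
        simp only [ContinuousLinearMap.sub_apply, ContinuousLinearMap.coe_comp',
          Function.comp_apply, ContinuousLinearMap.coe_coe]
        rw [hRei, map_smul, smul_eq_mul]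
      -- second derivative identity on the ball
      have hfd2 : ∀ x ∈ Metric.ball x₀ δ,
          fderiv ℝ (fun y => fderiv ℝ WR y ei) x ei = fderiv ℝ Gi x ei - fderiv ℝ Gi (R x) ei := by
        intro x hx
        have hEE : (fun y => fderiv ℝ WR y ei) =ᶠ[𝓝 x] (fun y => Gi y - ε * Gi (R y)) :=
          Filter.eventuallyEq_of_mem (Metric.isOpen_ball.mem_nhds hx)
            (fun y hy => hfd1 y (hballdom hy))
        rw [hEE.fderiv_eq]
        have hxd : x ∈ domB N A₁ A₂ := hballdom hx
        have hGid' := hGidiff x hxd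
        have hGiRy := hGidiff (R x) (hRdom' x hxd)
        have hGiR : DifferentiableAt ℝ (fun y => Gi (R y)) x := hGiRy.comp x R.differentiableAt
        have hmul : DifferentiableAt ℝ (fun y => ε * Gi (R y)) x := hGiR.const_mul ε
        have e1 : fderiv ℝ (fun y => Gi y - ε * Gi (R y)) x
            = fderiv ℝ Gi x - fderiv ℝ (fun y => ε * Gi (R y)) x := fderiv_sub hGid' hmul
        have e2 : fderiv ℝ (fun y => ε * Gi (R y)) x = ε • fderiv ℝ (fun y => Gi (R y)) x :=
          fderiv_const_mul hGiR ε
        have e3 : fderiv ℝ (fun y => Gi (R y)) x = (fderiv ℝ Gi (R x)).comp (R : Euc N →L[ℝ] Euc N) :=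
          (hGiRy.hasFDerivAt.comp x R.hasFDerivAt).fderiv
        rw [e1, e2, e3]
        simp only [ContinuousLinearMap.sub_apply, ContinuousLinearMap.smul_apply,
          ContinuousLinearMap.coe_comp', Function.comp_apply, ContinuousLinearMap.coe_coe,
          smul_eq_mul]
        rw [hRei, map_smul, smul_eq_mul, ← mul_assoc, hε2, one_mul]
      have hdiffFi : ∀ x ∈ Metric.ball x₀ δ, DifferentiableAt ℝ (fun y => fderiv ℝ WR y ei) x := by
        intro x hx
        have hEE : (fun y => fderiv ℝ WR y ei) =ᶠ[𝓝 x] (fun y => Gi y - ε * Gi (R y)) :=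
          Filter.eventuallyEq_of_mem (Metric.isOpen_ball.mem_nhds hx)
            (fun y hy => hfd1 y (hballdom hy))
        have hxd : x ∈ domB N A₁ A₂ := hballdom hx
        have hGid' := hGidiff x hxd
        have hGiRy := hGidiff (R x) (hRdom' x hxd)
        have hGiR : DifferentiableAt ℝ (fun y => Gi (R y)) x := hGiRy.comp x R.differentiableAt
        exact ((hGid'.sub (hGiR.const_mul ε))).congr_of_eventuallyEq hEE
      -- the line
      set ℓ : ℝ → Euc N := fun s => x₀ + s • ei with hℓd
      have hℓ0 : ℓ 0 = x₀ := by simp [hℓd]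
      have hdℓ : ∀ s : ℝ, HasDerivAt ℓ ei s := by
        intro s
        have h1 : HasDerivAt (fun s : ℝ => s • ei) ((1:ℝ) • ei) s :=
          (hasDerivAt_id s).smul_const ei
        have h2 := h1.const_add x₀
        rw [one_smul] at h2
        exact h2
      have hlmem : ∀ s ∈ Icc (-h) h, ℓ s ∈ Metric.ball x₀ δ := by
        intro s hs
        rw [Metric.mem_ball, hℓd]
        simp only [dist_eq_norm, add_sub_cancel_left, norm_smul, hnei, mul_one,
          Real.norm_eq_abs]
        have : |s| ≤ h := abs_le.2 ⟨hs.1, hs.2⟩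
        linarith
      have hd1 : ∀ s ∈ Icc (-h) h, HasDerivAt (fun s => WR (ℓ s)) (fderiv ℝ WR (ℓ s) ei) s := by
        intro s hs
        exact ((hWRdiff _ (hballdom (hlmem s hs))).hasFDerivAt).comp_hasDerivAt s (hdℓ s)
      have hd2 : ∀ s ∈ Icc (-h) h, HasDerivAt (fun s => fderiv ℝ WR (ℓ s) ei)
          (fderiv ℝ (fun y => fderiv ℝ WR y ei) (ℓ s) ei) s := by
        intro s hs
        exact ((hdiffFi _ (hlmem s hs)).hasFDerivAt).comp_hasDerivAt s (hdℓ s)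
      have hbdφ : ∀ s ∈ Icc (-h) h, |WR (ℓ s)| ≤ σv := by
        intro s hs
        rw [hWReq]
        exact hptw _ (hballhalf (hlmem s hs)) t₀ ht₀17
      have hHoldφ : ∀ s ∈ Icc (-h) h,
          |fderiv ℝ (fun y => fderiv ℝ WR y ei) (ℓ s) ei
            - fderiv ℝ (fun y => fderiv ℝ WR y ei) (ℓ 0) ei| ≤ 2*(M*h^γ) := by
        intro s hs
        rw [hℓ0, hfd2 (ℓ s) (hlmem s hs), hfd2 x₀ (Metric.mem_ball_self (by linarith))]
        have hlsd : ℓ s ∈ domB N A₁ A₂ := hballdom (hlmem s hs)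
        have hRlsd : R (ℓ s) ∈ domB N A₁ A₂ := hRdom' _ hlsd
        have hRx₀d : R x₀ ∈ domB N A₁ A₂ := hRdom' _ hx₀dom
        have k1 := (hHv1.2 (ℓ s) hlsd t₀ ht₀01 x₀ hx₀dom t₀ ht₀01).1 i i
        have k2 := (hHv1.2 (R (ℓ s)) hRlsd t₀ ht₀01 (R x₀) hRx₀d t₀ ht₀01).1 i i
        rw [sub_self, abs_zero, Real.zero_rpow (by positivity : γ/2 ≠ 0), add_zero] at k1 k2
        have hnorm1 : ‖ℓ s - x₀‖ = |s| := by
          rw [hℓd]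
          simp only [add_sub_cancel_left, norm_smul, hnei, mul_one, Real.norm_eq_abs]
        have hnorm2 : ‖R (ℓ s) - R x₀‖ = |s| := by rw [hRnorm, hnorm1]
        have hsh : |s| ≤ h := abs_le.2 ⟨hs.1, hs.2⟩
        have hrp : |s| ^ γ ≤ h ^ γ := Real.rpow_le_rpow (abs_nonneg _) hsh hγ0.le
        have hMle : M' * |s| ^ γ ≤ M * h ^ γ :=
          mul_le_mul hM'M.le hrp (Real.rpow_nonneg (abs_nonneg _) _) (by linarith)
        rw [hnorm1] at k1
        rw [hnorm2] at k2
        -- k1 : |sderiv2 V (ℓ s) ei ei - sderiv2 V x₀ ei ei| ≤ M' * |s|^γ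
        have hiden : ∀ x : Euc N, sderiv2 (fun z => v₁ z t₀) x (EuclideanSpace.single i 1)
            (EuclideanSpace.single i 1) = fderiv ℝ Gi x ei := by
          intro x
          rfl
        simp only [hiden] at k1 k2
        have : (fderiv ℝ Gi (ℓ s) ei - fderiv ℝ Gi (R (ℓ s)) ei)
            - (fderiv ℝ Gi x₀ ei - fderiv ℝ Gi (R x₀) ei)
            = (fderiv ℝ Gi (ℓ s) ei - fderiv ℝ Gi x₀ ei)
            - (fderiv ℝ Gi (R (ℓ s)) ei - fderiv ℝ Gi (R x₀) ei) := by ring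
        rw [this]
        calc |(fderiv ℝ Gi (ℓ s) ei - fderiv ℝ Gi x₀ ei)
            - (fderiv ℝ Gi (R (ℓ s)) ei - fderiv ℝ Gi (R x₀) ei)|
            ≤ |fderiv ℝ Gi (ℓ s) ei - fderiv ℝ Gi x₀ ei|
              + |fderiv ℝ Gi (R (ℓ s)) ei - fderiv ℝ Gi (R x₀) ei| := abs_sub _ _
          _ ≤ M * h ^ γ + M * h ^ γ := by
              exact add_le_add (le_trans k1 hMle) (le_trans k2 hMle)
          _ = 2*(M*h^γ) := by ring
      have hinterp := s8_interp2 (fun s => WR (ℓ s)) (fun s => fderiv ℝ WR (ℓ s) ei)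
        (fun s => fderiv ℝ (fun y => fderiv ℝ WR y ei) (ℓ s) ei) h σv (2*(M*h^γ))
        hhpos hd1 hd2 hbdφ hHoldφ
      have hfin : sderiv2 WR x₀ ei ei = fderiv ℝ (fun y => fderiv ℝ WR y ei) (ℓ 0) ei := by
        rw [hℓ0]
        rfl
      rw [hfin]
      calc |fderiv ℝ (fun y => fderiv ℝ WR y ei) (ℓ 0) ei| ≤ 4*σv/h^2 + 2*(2*(M*h^γ)) := hinterp
        _ = 4*σv/h^2 + 4*M*h^γ := by ring
    have hlapeq : lapl WR x₀ = ∑ i : Fin N,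
        sderiv2 WR x₀ (EuclideanSpace.single i 1) (EuclideanSpace.single i 1) := rfl
    rw [hlapeq]
    calc |∑ i : Fin N, sderiv2 WR x₀ (EuclideanSpace.single i 1) (EuclideanSpace.single i 1)|
        ≤ ∑ i : Fin N, |sderiv2 WR x₀ (EuclideanSpace.single i 1) (EuclideanSpace.single i 1)| :=
          Finset.abs_sum_le_sum_abs _ _
      _ ≤ ∑ _i : Fin N, (4*σv/h^2 + 4*M*h^γ) := Finset.sum_le_sum (fun i _ => key_i i)
      _ = (N:ℝ) * (4*σv/h^2 + 4*M*h^γ) := by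
          rw [Finset.sum_const, Finset.card_univ, Fintype.card_fin, nsmul_eq_mul]
  -- assemble the contradiction
  have hpde := hsys.1 x₀ hx₀half t₀ ht₀01
  have hLeq : lapl (fun y => refDiff v₁ e₁ y t₀) x₀ = lapl WR x₀ := by
    congr 1
    funext y
    rw [hWReq]
  rw [hLeq] at hpde
  have hw1nn := (hsys.2.2.2.1 x₀ hx₀half t₀ ht₀01).1
  have hw1le : |refDiff v₁ e₁ x₀ t₀| ≤ σv := hptw x₀ hx₀half t₀ ht₀17
  have hc11b := (hmbnd x₀ hx₀half t₀ ht₀01).1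
  have hc11w1 : |c11 x₀ t₀ * refDiff v₁ e₁ x₀ t₀| ≤ M * σv := by
    rw [abs_mul]
    have hm11M : m11 ≤ M := by linarith
    exact mul_le_mul (le_trans hc11b hm11M) hw1le (abs_nonneg _) (by linarith)
  have hcw : ε₁ * ε₁ < c12 x₀ t₀ * refDiff2 v₂ e₁ x₀ t₀ :=
    mul_lt_mul'' hc12pt hw2 hε₁.le hε₁.le
  have hT := hTbd
  have hL := hlapbd
  have habsT := abs_le.1 hT
  have habsL := abs_le.1 hL
  have habsC := abs_le.1 hc11w1
  -- combine
  have hchain : ε₁ * ε₁ < (2*σv/h + 2*M*h^(γ/2)) + ((N:ℝ) * (4*σv/h^2 + 4*M*h^γ)) + M * σv := by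
    linarith [hpde, hcw, habsT.2, habsL.1, habsC.1]
  have hσD : σv * D = ε₁^2/4 := by
    rw [hσd]
    field_simp
  have hsplit : (2*σv/h + 2*M*h^(γ/2)) + ((N:ℝ) * (4*σv/h^2 + 4*M*h^γ)) + M * σv
      = σv * D + 2*M*h^(γ/2) + 4*(N:ℝ)*M*h^γ := by
    rw [hDd]
    field_simp
    ring
  have hA2 : 2*M*h^(γ/2) ≤ ε₁^2/4 := by
    have := mul_le_mul_of_nonneg_left hpow1 (by linarith : (0:ℝ) ≤ 2*M)
    have ha1v : 2*M*a1 = ε₁^2/4 := by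
      rw [ha1d]
      field_simp
      ring
    linarith
  have hB2 : 4*(N:ℝ)*M*h^γ ≤ ε₁^2/4 := by
    have := mul_le_mul_of_nonneg_left hpow2 (by positivity : (0:ℝ) ≤ 4*(N:ℝ)*M)
    have ha2v : 4*(N:ℝ)*M*a2 = ε₁^2/4 := by
      rw [ha2d]
      field_simp
      ring
    linarith
  have hsq : ε₁ * ε₁ = ε₁^2 := by ring
  rw [hsq, hsplit, hσD] at hchain
  linarith


end
end

section
/- Let 𝒰 ⊂ C(B̄) and suppose that the set ℳ := {e ∈ S^{N-1} : z(x) ≥ z(σ_e(x)) for all x ∈ B(e) and all z ∈ 𝒰} contains a nonempty subset 𝒩 with the following properties: (i) 𝒩 is relatively open in S^{N-1}; (ii) for every e in the relative boundary ∂𝒩 of 𝒩 in S^{N-1} and every z ∈ 𝒰, one has z ≤ z∘σ_e in B(e). Then there exists p ∈ S^{N-1} such that every element of 𝒰 is foliated Schwarz symmetric with respect to p. -/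
noncomputable section

open Metric Set Filter
open scoped Topology RealInnerProductSpace BigOperators

variable {N : ℕ}

namespace S15

open Real

variable {N : ℕ}

/-- The set `ℳ` of reflection-monotonicity directions. -/
def MMset (N : ℕ) (A₁ A₂ : ℝ) (U : Set (Euc N → ℝ)) : Set (Euc N) :=
  {e ∈ unitSph N | ∀ z ∈ U, ∀ x ∈ halfB N A₁ A₂ e, z (reflHyp e x) ≤ z x}

lemma mem_unitSph {e : Euc N} : e ∈ unitSph N ↔ ‖e‖ = 1 := Iff.rfl

lemma inner_unit_self {e : Euc N} (he : ‖e‖ = 1) : ⟪e, e⟫ = (1:ℝ) := by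
  rw [real_inner_self_eq_norm_mul_norm, he]; norm_num

lemma refl_neg (e x : Euc N) : reflHyp (-e) x = reflHyp e x := by
  unfold reflHyp
  rw [inner_neg_right, smul_neg, ← neg_smul]
  ring_nf

lemma refl_norm {e : Euc N} (he : ‖e‖ = 1) (x : Euc N) : ‖reflHyp e x‖ = ‖x‖ := by
  have h : ‖reflHyp e x‖ ^ 2 = ‖x‖ ^ 2 := by
    unfold reflHyp
    rw [norm_sub_sq_real, real_inner_smul_right, norm_smul, he, mul_one]
    rw [Real.norm_eq_abs, sq_abs]
    ring
  nlinarith [norm_nonneg (reflHyp e x), norm_nonneg x]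

lemma refl_inner {e : Euc N} (he : ‖e‖ = 1) (x : Euc N) :
    ⟪reflHyp e x, e⟫ = -⟪x, e⟫ := by
  unfold reflHyp
  rw [inner_sub_left, real_inner_smul_left, inner_unit_self he]
  ring

lemma refl_of_inner_zero {e x : Euc N} (h : ⟪x, e⟫ = (0:ℝ)) : reflHyp e x = x := by
  unfold reflHyp; rw [h]; simp

lemma refl_invol {e : Euc N} (he : ‖e‖ = 1) (x : Euc N) :
    reflHyp e (reflHyp e x) = x := by
  have h1 := refl_inner he x
  show reflHyp e x - (2 * ⟪reflHyp e x, e⟫) • e = x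
  rw [h1]
  show x - (2 * ⟪x, e⟫) • e - (2 * -⟪x, e⟫) • e = x
  module

lemma domB_of_norm {A₁ A₂ : ℝ} {x y : Euc N} (hx : x ∈ domB N A₁ A₂)
    (h : ‖y‖ = ‖x‖) : y ∈ domB N A₁ A₂ := by
  obtain ⟨h1, h2⟩ := hx
  exact ⟨by rw [h]; exact h1, by rw [h]; exact h2⟩

lemma refl_mem_domB {A₁ A₂ : ℝ} {e x : Euc N} (he : ‖e‖ = 1)
    (hx : x ∈ domB N A₁ A₂) : reflHyp e x ∈ domB N A₁ A₂ :=
  domB_of_norm hx (refl_norm he x)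

/-- closedness of `MMset` along sequences. -/
lemma MM_limit {A₁ A₂ : ℝ} {U : Set (Euc N → ℝ)}
    (hU : ∀ z ∈ U, ContinuousOn z (closure (domB N A₁ A₂)))
    (f : ℕ → Euc N) (e : Euc N) (hf : ∀ n, f n ∈ MMset N A₁ A₂ U)
    (hlim : Tendsto f atTop (𝓝 e)) (he : ‖e‖ = 1) : e ∈ MMset N A₁ A₂ U := by
  refine ⟨he, fun z hz x hx => ?_⟩
  obtain ⟨hxB, hxp⟩ := hx
  have hinner : Tendsto (fun n => (⟪x, f n⟫ : ℝ)) atTop (𝓝 ⟪x, e⟫) :=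
    ((continuous_const.inner continuous_id).tendsto e).comp hlim
  have hev : ∀ᶠ n in atTop, (0:ℝ) < ⟪x, f n⟫ := (tendsto_order.mp hinner).1 0 hxp
  have hrt : Tendsto (fun n => reflHyp (f n) x) atTop (𝓝 (reflHyp e x)) := by
    unfold reflHyp
    exact tendsto_const_nhds.sub ((hinner.const_mul 2).smul hlim)
  have hm : ∀ᶠ n in atTop, z (reflHyp (f n) x) ≤ z x := by
    filter_upwards [hev] with n hn using (hf n).2 z hz x ⟨hxB, hn⟩
  have hcl : ContinuousWithinAt z (closure (domB N A₁ A₂)) (reflHyp e x) :=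
    (hU z hz).continuousWithinAt (subset_closure (refl_mem_domB he hxB))
  have hzt : Tendsto (fun n => z (reflHyp (f n) x)) atTop (𝓝 (z (reflHyp e x))) :=
    hcl.tendsto.comp (tendsto_nhdsWithin_of_tendsto_nhds_of_eventually_within _ hrt
      (Eventually.of_forall fun n => subset_closure (refl_mem_domB ((hf n).1) hxB)))
  exact le_of_tendsto hzt hm

/-- 1-D monotonicity lemma. -/
lemma oneD (h : ℝ → ℝ) (heven : ∀ β, h (-β) = h β) (hper : ∀ β, h (β + 2*π) = h β)
    (δ : ℝ) (hδ : 0 < δ)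
    (hwin : ∀ θ, 0 < θ → θ < δ → ∀ β, 0 < Real.sin (θ - β) → h (2*θ - β) ≤ h β) :
    ∀ θ β, 0 ≤ θ → θ ≤ π → 0 < θ - β → θ - β < π → h (2*θ - β) ≤ h β := by
  have SS : ∀ u v, 0 ≤ u → u < v → v ≤ π → v - u < 2*δ → h v ≤ h u := by
    intro u v h0 huv hvπ hvd
    have h1 : 0 < (v-u)/2 := by linarith
    have h2 : (v-u)/2 < δ := by linarith
    have h3 : 0 < Real.sin ((v-u)/2 - (-u)) := by
      have he : (v-u)/2 - (-u) = (v+u)/2 := by ring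
      rw [he]
      apply Real.sin_pos_of_pos_of_lt_pi
      · linarith
      · linarith [Real.pi_pos]
    have h4 := hwin _ h1 h2 (-u) h3
    have h5 : 2*((v-u)/2) - (-u) = v := by ring
    rw [h5, heven] at h4; exact h4
  have chain : ∀ n : ℕ, ∀ u v, 0 ≤ u → u ≤ v → v ≤ π → v ≤ u + n*δ → h v ≤ h u := by
    intro n
    induction n with
    | zero =>
        intro u v h0 huv hvπ hle
        have hvu : v ≤ u := by push_cast at hle; linarith
        have : v = u := le_antisymm hvu huv
        rw [this]
    | succ n ih =>
        intro u v h0 huv hvπ hle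
        by_cases hc : v ≤ u + n*δ
        · exact ih u v h0 huv hvπ hc
        push_neg at hc
        have hnd : 0 ≤ (n:ℝ)*δ := by positivity
        have huv' : u < v := by linarith
        by_cases hd : v - δ ≤ u
        · exact SS u v h0 huv' hvπ (by linarith)
        push_neg at hd
        have hstep : h v ≤ h (v - δ) := SS (v-δ) v (by linarith) (by linarith) hvπ (by linarith)
        have hrec : h (v-δ) ≤ h u := by
          apply ih u (v-δ) h0 (by linarith) (by linarith)
          push_cast at hle ⊢; linarith
        exact hstep.trans hrec
  have mono : ∀ u v, 0 ≤ u → u ≤ v → v ≤ π → h v ≤ h u := by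
    intro u v h0 huv hvπ
    obtain ⟨n, hn⟩ := exists_nat_ge ((v-u)/δ)
    refine chain n u v h0 huv hvπ ?_
    rw [div_le_iff₀ hδ] at hn; linarith
  intro θ β hθ0 hθπ hs0 hsπ
  have habs : h |β| = h β := by
    rcases abs_cases β with ⟨he, _⟩ | ⟨he, _⟩
    · rw [he]
    · rw [he]; exact heven β
  by_cases hble : 2*θ - β ≤ π
  · have h1 : h (2*θ-β) ≤ h |β| := by
      apply mono |β| (2*θ-β) (abs_nonneg β) ?_ hble
      rcases abs_cases β with ⟨he, _⟩ | ⟨he, _⟩ <;> rw [he] <;> linarith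
    rw [habs] at h1; exact h1
  · push_neg at hble
    have hkey : h (2*θ-β) = h (2*π - (2*θ-β)) := by
      have e1 := hper ((2*θ-β) - 2*π)
      have e2 : (2*θ-β) - 2*π + 2*π = 2*θ-β := by ring
      rw [e2] at e1
      have e3 : (2*θ-β) - 2*π = -(2*π - (2*θ-β)) := by ring
      rw [e1, e3, heven]
    rw [hkey]
    have h1 : h (2*π-(2*θ-β)) ≤ h |β| := by
      apply mono |β| _ (abs_nonneg β) ?_ (by linarith)
      rcases abs_cases β with ⟨he, _⟩ | ⟨he, _⟩ <;> rw [he] <;> linarith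
    rw [habs] at h1; exact h1

section Comb

variable {e₀ u : Euc N}

lemma comb_inner (he₀ : ‖e₀‖ = 1) (hu : ‖u‖ = 1) (hperp : ⟪u, e₀⟫ = (0:ℝ))
    {w : Euc N} (hwe : ⟪w, e₀⟫ = (0:ℝ)) (hwu : ⟪w, u⟫ = (0:ℝ)) (A B C D : ℝ) :
    ⟪w + A•e₀ + B•u, C•e₀ + D•u⟫ = A*C + B*D := by
  have h1 := inner_unit_self he₀
  have h2 := inner_unit_self hu
  have h3 : ⟪e₀, u⟫ = (0:ℝ) := by rw [real_inner_comm]; exact hperp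
  simp only [inner_add_left, inner_add_right, real_inner_smul_left, real_inner_smul_right,
    h1, h2, h3, hperp, hwe, hwu]
  ring

lemma comb_norm_sq (he₀ : ‖e₀‖ = 1) (hu : ‖u‖ = 1) (hperp : ⟪u, e₀⟫ = (0:ℝ))
    {w : Euc N} (hwe : ⟪w, e₀⟫ = (0:ℝ)) (hwu : ⟪w, u⟫ = (0:ℝ)) (A B : ℝ) :
    ‖w + A•e₀ + B•u‖^2 = ‖w‖^2 + A^2 + B^2 := by
  have h3 : ⟪e₀, u⟫ = (0:ℝ) := by rw [real_inner_comm]; exact hperp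
  have hin1 : ⟪w, A•e₀ + B•u⟫ = (0:ℝ) := by
    simp only [inner_add_right, real_inner_smul_right, hwe, hwu]; ring
  have hin2 : ⟪A•e₀, B•u⟫ = (0:ℝ) := by
    simp only [real_inner_smul_left, real_inner_smul_right, h3]; ring
  rw [add_assoc, norm_add_sq_real, hin1, norm_add_sq_real, hin2, norm_smul, norm_smul,
    he₀, hu]
  simp only [Real.norm_eq_abs, mul_one]
  rw [sq_abs, sq_abs]
  ring

lemma norm_comb (he₀ : ‖e₀‖ = 1) (hu : ‖u‖ = 1) (hperp : ⟪u, e₀⟫ = (0:ℝ)) (θ : ℝ) :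
    ‖(Real.cos θ)•e₀ + (Real.sin θ)•u‖ = 1 := by
  have h := comb_norm_sq he₀ hu hperp (w := 0) (by simp) (by simp) (Real.cos θ) (Real.sin θ)
  rw [zero_add] at h
  simp only [norm_zero] at h
  have h2 : ‖(Real.cos θ)•e₀ + (Real.sin θ)•u‖^2 = 1 := by
    rw [h]; have := Real.sin_sq_add_cos_sq θ; linarith
  nlinarith [norm_nonneg ((Real.cos θ)•e₀ + (Real.sin θ)•u)]

lemma refl_comb (he₀ : ‖e₀‖ = 1) (hu : ‖u‖ = 1) (hperp : ⟪u, e₀⟫ = (0:ℝ))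
    {w : Euc N} (hwe : ⟪w, e₀⟫ = (0:ℝ)) (hwu : ⟪w, u⟫ = (0:ℝ)) (A B C D : ℝ) :
    reflHyp (C•e₀ + D•u) (w + A•e₀ + B•u)
      = w + (A - 2*(A*C + B*D)*C)•e₀ + (B - 2*(A*C + B*D)*D)•u := by
  have hin := comb_inner he₀ hu hperp hwe hwu A B C D
  show w + A•e₀ + B•u - (2*⟪w + A•e₀ + B•u, C•e₀ + D•u⟫)•(C•e₀ + D•u) = _
  rw [hin]
  module

end Comb

lemma trigA (s α θ : ℝ) :
    s*Real.cos α - 2*((s*Real.cos α)*Real.cos θ + (s*Real.sin α)*Real.sin θ)*Real.cos θ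
      = s*Real.cos (2*θ + π - α) := by
  rw [show 2*θ + π - α = (θ+θ) + (π - α) by ring]
  simp only [Real.cos_add, Real.sin_add, Real.cos_pi_sub, Real.sin_pi_sub]
  linear_combination (-(s*Real.cos α)) * Real.sin_sq_add_cos_sq θ

lemma trigB (s α θ : ℝ) :
    s*Real.sin α - 2*((s*Real.cos α)*Real.cos θ + (s*Real.sin α)*Real.sin θ)*Real.sin θ
      = s*Real.sin (2*θ + π - α) := by
  rw [show 2*θ + π - α = (θ+θ) + (π - α) by ring]
  simp only [Real.cos_add, Real.sin_add, Real.cos_pi_sub, Real.sin_pi_sub]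
  linear_combination (-(s*Real.sin α)) * Real.sin_sq_add_cos_sq θ

end S15

namespace S15

open Real

variable {N : ℕ}

set_option maxHeartbeats 1600000 in
/-- Rotating-plane rigidity: membership of the initial arc in `ℳ` together with a
reflection symmetry at the base point propagates along the whole half great circle. -/
lemma rigid {A₁ A₂ : ℝ} {U : Set (Euc N → ℝ)} {e₀ u : Euc N}
    (he₀ : ‖e₀‖ = 1) (hu : ‖u‖ = 1) (hperp : ⟪u, e₀⟫ = (0:ℝ))
    (hsym : ∀ z ∈ U, ∀ x ∈ domB N A₁ A₂, z (reflHyp e₀ x) = z x)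
    (δ : ℝ) (hδ : 0 < δ)
    (hwin : ∀ θ : ℝ, 0 < θ → θ < δ →
      ((Real.cos θ)•e₀ + (Real.sin θ)•u) ∈ MMset N A₁ A₂ U) :
    ∀ θs : ℝ, 0 ≤ θs → θs ≤ π →
      ((Real.cos θs)•e₀ + (Real.sin θs)•u) ∈ MMset N A₁ A₂ U := by
  intro θs hθ0 hθπ
  refine ⟨norm_comb he₀ hu hperp θs, ?_⟩
  intro z hz x hx
  obtain ⟨hxB, hxpos⟩ := hx
  set se : ℝ := ⟪x, e₀⟫ with hse_def
  set su : ℝ := ⟪x, u⟫ with hsu_def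
  have hinner_comb : ∀ C D : ℝ, ⟪x, C•e₀ + D•u⟫ = C*se + D*su := by
    intro C D
    simp only [inner_add_right, real_inner_smul_right, hse_def, hsu_def]
  have hxθ : (0:ℝ) < Real.cos θs * se + Real.sin θs * su := by
    have := hxpos; rwa [hinner_comb] at this
  have hsnz : ¬(se = 0 ∧ su = 0) := by
    rintro ⟨h1, h2⟩; rw [h1, h2] at hxθ; simp at hxθ
  have hs2 : 0 < se^2 + su^2 := by
    rcases not_and_or.mp hsnz with h | h
    · have : 0 < se^2 := by positivity
      nlinarith [sq_nonneg su]
    · have : 0 < su^2 := by positivity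
      nlinarith [sq_nonneg se]
  set s : ℝ := Real.sqrt (se^2 + su^2) with hs_def
  have hs : 0 < s := Real.sqrt_pos.mpr hs2
  set z₀ : ℂ := (se : ℂ) + su * Complex.I with hz₀_def
  have habs : ‖z₀‖ = s := by
    rw [hz₀_def, Complex.norm_add_mul_I]
  have hz₀ : z₀ ≠ 0 := by
    intro h; rw [h] at habs; simp at habs; rw [← habs] at hs; exact lt_irrefl _ hs
  set α₀ : ℝ := Complex.arg z₀ with hα₀_def
  have hre : z₀.re = se := by simp [hz₀_def]
  have him : z₀.im = su := by simp [hz₀_def]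
  have hcosα : s * Real.cos α₀ = se := by
    rw [hα₀_def, Complex.cos_arg hz₀, hre, habs]
    field_simp
  have hsinα : s * Real.sin α₀ = su := by
    rw [hα₀_def, Complex.sin_arg, him, habs]
    field_simp
  set w : Euc N := x - se•e₀ - su•u with hw_def
  have h1 := inner_unit_self he₀
  have h2 := inner_unit_self hu
  have h3 : ⟪e₀, u⟫ = (0:ℝ) := by rw [real_inner_comm]; exact hperp
  have hwe : ⟪w, e₀⟫ = (0:ℝ) := by
    simp only [hw_def, inner_sub_left, real_inner_smul_left, h1, hperp, ← hse_def]
    ring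
  have hwu : ⟪w, u⟫ = (0:ℝ) := by
    simp only [hw_def, inner_sub_left, real_inner_smul_left, h2, h3, ← hsu_def]
    ring
  set pt : ℝ → Euc N := fun α => w + (s*Real.cos α)•e₀ + (s*Real.sin α)•u with hpt_def
  have hpt0 : pt α₀ = x := by
    simp only [hpt_def, hcosα, hsinα, hw_def]
    module
  have hptnorm : ∀ α, ‖pt α‖ = ‖x‖ := by
    intro α
    have hk : ∀ α : ℝ, ‖pt α‖^2 = ‖w‖^2 + s^2 := by
      intro α
      rw [hpt_def]
      rw [comb_norm_sq he₀ hu hperp hwe hwu]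
      have := Real.sin_sq_add_cos_sq α
      nlinarith [this]
    have h5 : ‖pt α‖^2 = ‖x‖^2 := by rw [hk α, ← hk α₀, hpt0]
    calc ‖pt α‖ = Real.sqrt (‖pt α‖^2) := by rw [Real.sqrt_sq (norm_nonneg _)]
    _ = Real.sqrt (‖x‖^2) := by rw [h5]
    _ = ‖x‖ := Real.sqrt_sq (norm_nonneg _)
  have hptB : ∀ α, pt α ∈ domB N A₁ A₂ := fun α => domB_of_norm hxB (hptnorm α)
  have hptinner : ∀ α θ : ℝ, ⟪pt α, (Real.cos θ)•e₀ + (Real.sin θ)•u⟫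
      = s * Real.cos (α - θ) := by
    intro α θ
    rw [hpt_def]
    rw [comb_inner he₀ hu hperp hwe hwu]
    rw [Real.cos_sub]; ring
  have hrefl : ∀ α θ : ℝ, reflHyp ((Real.cos θ)•e₀ + (Real.sin θ)•u) (pt α)
      = pt (2*θ + π - α) := by
    intro α θ
    rw [hpt_def]
    rw [refl_comb he₀ hu hperp hwe hwu]
    rw [trigA s α θ, trigB s α θ]
  have hreflE0 : ∀ α : ℝ, reflHyp e₀ (pt α) = pt (π - α) := by
    intro α
    have hiE : ⟪pt α, e₀⟫ = s * Real.cos α := by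
      rw [hpt_def]
      simp only [inner_add_left, real_inner_smul_left, hwe, h1, hperp]
      ring
    show pt α - (2 * ⟪pt α, e₀⟫)•e₀ = pt (π - α)
    rw [hiE, hpt_def]
    simp only []
    rw [Real.cos_pi_sub, Real.sin_pi_sub]
    module
  have hptper : ∀ γ : ℝ, pt (γ + 2*π) = pt γ := by
    intro γ
    simp only [hpt_def, Real.cos_add_two_pi, Real.sin_add_two_pi]
  set h : ℝ → ℝ := fun β => z (pt (β + π/2)) with hh_def
  have hsymPt : ∀ α, z (pt (π - α)) = z (pt α) := by
    intro α
    rw [← hreflE0 α]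
    exact hsym z hz (pt α) (hptB α)
  have heven : ∀ β, h (-β) = h β := by
    intro β
    show z (pt (-β + π/2)) = z (pt (β + π/2))
    rw [show -β + π/2 = π - (β + π/2) by ring]
    exact hsymPt _
  have hper : ∀ β, h (β + 2*π) = h β := by
    intro β
    show z (pt (β + 2*π + π/2)) = z (pt (β + π/2))
    rw [show β + 2*π + π/2 = (β + π/2) + 2*π by ring, hptper]
  have hwinh : ∀ θ, 0 < θ → θ < δ → ∀ β, 0 < Real.sin (θ - β) → h (2*θ - β) ≤ h β := by
    intro θ hθ1 hθ2 β hβ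
    have hmm := hwin θ hθ1 hθ2
    have hc1 : ⟪pt (β + π/2), (Real.cos θ)•e₀ + (Real.sin θ)•u⟫ = s * Real.sin (θ - β) := by
      rw [hptinner]
      have : Real.cos (β + π/2 - θ) = Real.sin (θ - β) := by
        rw [show β + π/2 - θ = (β - θ) + π/2 by ring, Real.cos_add]
        simp only [Real.cos_pi_div_two, Real.sin_pi_div_two, mul_zero, mul_one, zero_sub]
        rw [← Real.sin_neg, neg_sub]
      rw [this]
    have hEθ := hmm.2 z hz (pt (β + π/2)) ⟨hptB _, by rw [hc1]; positivity⟩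
    have harg : 2*θ + π - (β + π/2) = (2*θ - β) + π/2 := by ring
    calc h (2*θ - β) = z (pt ((2*θ - β) + π/2)) := rfl
    _ = z (reflHyp ((Real.cos θ)•e₀ + (Real.sin θ)•u) (pt (β + π/2))) := by
        rw [hrefl, harg]
    _ ≤ z (pt (β + π/2)) := hEθ
    _ = h β := rfl
  have hone := oneD h heven hper δ hδ hwinh
  set β₀ : ℝ := α₀ - π/2 with hβ₀_def
  have hB0 : β₀ + π/2 = α₀ := by rw [hβ₀_def]; ring
  have hxh : z x = h β₀ := by
    rw [← hpt0]
    show z (pt α₀) = z (pt (β₀ + π/2))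
    rw [hB0]
  have hgoal_eq : z (reflHyp ((Real.cos θs)•e₀ + (Real.sin θs)•u) x) = h (2*θs - β₀) := by
    rw [← hpt0, hrefl]
    show z (pt (2*θs + π - α₀)) = z (pt ((2*θs - β₀) + π/2))
    rw [show (2*θs - β₀) + π/2 = 2*θs + π - α₀ by rw [hβ₀_def]; ring]
  have hcond : (0:ℝ) < Real.cos (α₀ - θs) := by
    have h6 : (0:ℝ) < s * Real.cos (α₀ - θs) := by
      have := hxpos
      rw [← hpt0, hptinner] at this
      exact this
    nlinarith
  have hsinT : 0 < Real.sin (θs - β₀) := by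
    rw [show θs - β₀ = (θs - α₀) + π/2 by rw [hβ₀_def]; ring, Real.sin_add]
    simp only [Real.cos_pi_div_two, Real.sin_pi_div_two, mul_zero, mul_one, zero_add]
    rw [show θs - α₀ = -(α₀ - θs) by ring, Real.cos_neg]
    exact hcond
  have hαlo : -π < α₀ := Complex.neg_pi_lt_arg z₀
  have hαhi : α₀ ≤ π := Complex.arg_le_pi z₀
  set T : ℝ := θs - β₀ with hT_def
  have hTlo : -(π/2) ≤ T := by rw [hT_def, hβ₀_def]; linarith
  have hThi : T < 5*π/2 := by rw [hT_def, hβ₀_def]; linarith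
  have hT0 : 0 < T := by
    by_contra hcon
    push_neg at hcon
    have : Real.sin (-T) ≥ 0 := by
      apply Real.sin_nonneg_of_nonneg_of_le_pi
      · linarith
      · linarith [Real.pi_pos]
    rw [Real.sin_neg] at this
    linarith [hsinT]
  have hcase : T < π ∨ 2*π < T := by
    by_contra hcon
    push_neg at hcon
    obtain ⟨hc1, hc2⟩ := hcon
    have hpos : Real.sin (T - π) ≥ 0 := by
      apply Real.sin_nonneg_of_nonneg_of_le_pi
      · linarith
      · linarith
    rw [Real.sin_sub_pi] at hpos
    linarith [hsinT]
  rw [hxh, hgoal_eq]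
  rcases hcase with hc | hc
  · exact hone θs β₀ hθ0 hθπ hT0 hc
  · have hA := hone θs (β₀ + 2*π) hθ0 hθπ (by rw [hT_def] at hc; clear_value T β₀; linarith)
      (by rw [hT_def] at hThi; clear_value T β₀; linarith [Real.pi_pos])
    have e1 : h (β₀ + 2*π) = h β₀ := hper β₀
    have e2 : h (2*θs - (β₀ + 2*π)) = h (2*θs - β₀) := by
      have := hper (2*θs - β₀ - 2*π)
      rw [show 2*θs - β₀ - 2*π + 2*π = 2*θs - β₀ by ring] at this
      rw [show 2*θs - (β₀ + 2*π) = 2*θs - β₀ - 2*π by ring]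
      exact this.symm
    rw [e1, e2] at hA
    exact hA

/-- existence of a unit vector orthogonal to a given unit vector, `N ≥ 2`. -/
lemma exists_perp (hN : 2 ≤ N) (v : Euc N) (hv : ‖v‖ = 1) :
    ∃ u : Euc N, ‖u‖ = 1 ∧ ⟪u, v⟫ = (0:ℝ) := by
  have hmk : ∀ w : Euc N, w - (⟪w, v⟫ : ℝ)•v ≠ 0 →
      ∃ u : Euc N, ‖u‖ = 1 ∧ ⟪u, v⟫ = (0:ℝ) := by
    intro w hw
    refine ⟨‖w - (⟪w, v⟫ : ℝ)•v‖⁻¹ • (w - (⟪w, v⟫ : ℝ)•v), norm_smul_inv_norm hw, ?_⟩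
    rw [real_inner_smul_left, inner_sub_left, real_inner_smul_left, inner_unit_self hv]
    ring
  set i0 : Fin N := ⟨0, by omega⟩
  set i1 : Fin N := ⟨1, by omega⟩
  have hi01 : i0 ≠ i1 := by simp [i0, i1, Fin.ext_iff]
  set v₀ : Euc N := EuclideanSpace.single i0 (1:ℝ)
  set v₁ : Euc N := EuclideanSpace.single i1 (1:ℝ)
  by_cases h0 : v₀ - (⟪v₀, v⟫ : ℝ)•v = 0
  · by_cases h1 : v₁ - (⟪v₁, v⟫ : ℝ)•v = 0
    · exfalso
      have e0 : v₀ = (⟪v₀, v⟫ : ℝ)•v := by rwa [sub_eq_zero] at h0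
      have e1 : v₁ = (⟪v₁, v⟫ : ℝ)•v := by rwa [sub_eq_zero] at h1
      have hn0 : ‖v₀‖ = 1 := by simp [v₀, EuclideanSpace.norm_single]
      have hn1 : ‖v₁‖ = 1 := by simp [v₁, EuclideanSpace.norm_single]
      have hc0 : |⟪v₀, v⟫| = 1 := by
        have := congrArg norm e0
        rw [hn0, norm_smul, hv, mul_one, Real.norm_eq_abs] at this
        exact this.symm
      have hc1 : |⟪v₁, v⟫| = 1 := by
        have := congrArg norm e1
        rw [hn1, norm_smul, hv, mul_one, Real.norm_eq_abs] at this
        exact this.symm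
      have hinner01 : ⟪v₀, v₁⟫ = (0:ℝ) := by
        simp only [v₀, v₁]
        rw [EuclideanSpace.inner_single_left]
        simp [EuclideanSpace.single_apply, hi01]
      have : ⟪v₀, v₁⟫ = (⟪v₀, v⟫ : ℝ) * ⟪v₁, v⟫ := by
        nth_rewrite 1 [e0, e1]
        rw [real_inner_smul_left, real_inner_smul_right, inner_unit_self hv]
        ring
      rw [hinner01] at this
      have h4 : |(⟪v₀, v⟫ : ℝ) * ⟪v₁, v⟫| = 1 := by rw [abs_mul, hc0, hc1]; norm_num
      rw [← this] at h4
      simp at h4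
    · exact hmk v₁ h1
  · exact hmk v₀ h0

end S15

namespace S15

open Real

variable {N : ℕ}

set_option maxHeartbeats 3200000 in
lemma exists_pole (hN : 2 ≤ N) (A₁ A₂ : ℝ) (U : Set (Euc N → ℝ))
    (hU : ∀ z ∈ U, ContinuousOn z (closure (domB N A₁ A₂)))
    (Ns : Set (Euc N)) (hsub : Ns ⊆ MMset N A₁ A₂ U) (hne : Ns.Nonempty)
    (hopen : ∃ V : Set (Euc N), IsOpen V ∧ Ns = V ∩ unitSph N)
    (hbd : ∀ e ∈ relBoundary (unitSph N) Ns, ∀ z ∈ U, ∀ x ∈ halfB N A₁ A₂ e,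
      z x ≤ z (reflHyp e x)) :
    ∃ p : Euc N, ‖p‖ = 1 ∧
      ∀ e : Euc N, ‖e‖ = 1 → (0:ℝ) ≤ ⟪e, p⟫ → e ∈ MMset N A₁ A₂ U := by
  have hNpos : 0 < N := by omega
  set v₀ : Euc N := EuclideanSpace.single (⟨0, hNpos⟩ : Fin N) (1:ℝ) with hv₀_def
  have hv₀ : ‖v₀‖ = 1 := by simp [hv₀_def, EuclideanSpace.norm_single]
  by_cases hall : ∀ e : Euc N, ‖e‖ = 1 → e ∈ Ns
  · exact ⟨v₀, hv₀, fun e he _ => hsub (hall e he)⟩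
  push_neg at hall
  obtain ⟨k₀, hk₀n, hk₀⟩ := hall
  set K : Set (Euc N) := {e : Euc N | ‖e‖ = 1 ∧ e ∉ Ns} with hK_def
  have hKne : K.Nonempty := ⟨k₀, hk₀n, hk₀⟩
  obtain ⟨V, hVopen, hVNs⟩ := hopen
  have hKclosed : IsClosed K := by
    have hKeq : K = {e : Euc N | ‖e‖ = 1} ∩ Vᶜ := by
      ext e
      constructor
      · rintro ⟨h1, h2⟩
        exact ⟨h1, fun hv => h2 (by rw [hVNs]; exact ⟨hv, h1⟩)⟩
      · rintro ⟨h1, h2⟩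
        refine ⟨h1, fun hn => ?_⟩
        rw [hVNs] at hn
        exact h2 hn.1
    rw [hKeq]
    exact (isClosed_eq continuous_norm continuous_const).inter hVopen.isClosed_compl
  have hKcp : IsCompact K := by
    apply Metric.isCompact_of_isClosed_isBounded hKclosed
    apply (Metric.isBounded_closedBall (x := (0 : Euc N)) (r := 1)).subset
    intro e he
    simpa [Metric.mem_closedBall, dist_zero_right] using he.1.le
  obtain ⟨eb, hebNs⟩ := hne
  have hebS : ‖eb‖ = 1 := (hsub hebNs).1
  obtain ⟨e₀, he₀K, hmin'⟩ := hKcp.exists_isMinOn hKne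
    ((continuous_id.sub continuous_const).norm.continuousOn :
      ContinuousOn (fun k : Euc N => ‖k - eb‖) K)
  have hmin : ∀ k ∈ K, ‖e₀ - eb‖ ≤ ‖k - eb‖ := fun k hk => hmin' hk
  have he₀S : ‖e₀‖ = 1 := he₀K.1
  have he₀Ns : e₀ ∉ Ns := he₀K.2
  set c : ℝ := ⟪eb, e₀⟫ with hc_def
  have hCap : ∀ wv : Euc N, ‖wv‖ = 1 → c < ⟪eb, wv⟫ → wv ∈ Ns := by
    intro wv hwv hcw
    by_contra hwn
    have h1 := hmin wv ⟨hwv, hwn⟩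
    have h2 : ‖e₀ - eb‖^2 ≤ ‖wv - eb‖^2 := by
      have h2' := mul_self_le_mul_self (norm_nonneg (e₀ - eb)) h1
      nlinarith
    rw [norm_sub_sq_real, norm_sub_sq_real, he₀S, hwv, hebS] at h2
    have h4 : ⟪eb, wv⟫ ≤ c := by
      rw [hc_def, real_inner_comm wv eb, real_inner_comm e₀ eb]
      linarith
    linarith
  have hcabs : |c| ≤ 1 := by
    have := abs_real_inner_le_norm eb e₀
    rw [hebS, he₀S] at this; linarith
  have hc1 : c < 1 := by
    by_contra hcon
    push_neg at hcon
    have hceq : c = 1 := le_antisymm (abs_le.mp hcabs).2 hcon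
    have h5 : ‖eb - e₀‖^2 = 0 := by
      rw [norm_sub_sq_real, hebS, he₀S, ← hc_def, hceq]; ring
    have h6 : eb - e₀ = 0 := by
      apply norm_eq_zero.mp
      nlinarith [norm_nonneg (eb - e₀)]
    have heq : eb = e₀ := sub_eq_zero.mp h6
    exact he₀Ns (heq ▸ hebNs)
  -- the window lemma
  have hWIN : ∀ u : Euc N, ‖u‖ = 1 → ⟪u, e₀⟫ = (0:ℝ) → (0 < ⟪eb, u⟫ ∨ c = -1) →
      ∃ δ : ℝ, 0 < δ ∧ ∀ θ : ℝ, 0 < θ → θ < δ →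
        ((Real.cos θ)•e₀ + (Real.sin θ)•u) ∈ Ns := by
    intro u hu hperp hcase
    have hinner : ∀ θ : ℝ, ⟪eb, (Real.cos θ)•e₀ + (Real.sin θ)•u⟫
        = Real.cos θ * c + Real.sin θ * ⟪eb, u⟫ := by
      intro θ
      rw [inner_add_right, real_inner_smul_right, real_inner_smul_right, ← hc_def]
    rcases hcase with hb | hcm
    · refine ⟨min (π/2) (⟪eb, u⟫/(|c|+1)), lt_min (by positivity) (div_pos hb (by positivity)), ?_⟩
      intro θ hθ0 hθδ
      have hθ1 : θ < π/2 := lt_of_lt_of_le hθδ (min_le_left _ _)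
      have hθ2 : θ < ⟪eb, u⟫/(|c|+1) := lt_of_lt_of_le hθδ (min_le_right _ _)
      apply hCap _ (norm_comb he₀S hu hperp θ)
      rw [hinner θ]
      set b : ℝ := ⟪eb, u⟫ with hb_def
      set tt : ℝ := θ/2 with htt_def
      have htt0 : 0 < tt := by rw [htt_def]; linarith
      have httπ : tt < π := by rw [htt_def]; linarith [Real.pi_pos]
      have hsint : 0 < Real.sin tt := Real.sin_pos_of_pos_of_lt_pi htt0 httπ
      have hsintlt : Real.sin tt < tt := Real.sin_lt htt0
      have hcost : (1:ℝ)/2 ≤ Real.cos tt := by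
        have hc2 : Real.cos tt = 1 - 2*Real.sin (tt/2)^2 := by
          nth_rewrite 1 [show tt = 2*(tt/2) by ring]
          rw [Real.cos_two_mul]
          linear_combination 2*Real.sin_sq_add_cos_sq (tt/2)
        have hs1 : 0 ≤ Real.sin (tt/2) :=
          Real.sin_nonneg_of_nonneg_of_le_pi (by linarith) (by linarith [Real.pi_pos])
        have hs2 : Real.sin (tt/2) ≤ tt/2 := le_of_lt (Real.sin_lt (by linarith))
        have hs3 : Real.sin (tt/2)^2 ≤ (tt/2)^2 := by nlinarith
        have htt1 : tt ≤ 1 := by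
          have := Real.pi_le_four
          rw [htt_def]; linarith
        nlinarith
      have hbig : θ * (|c|+1) < b := by
        have hpos : (0:ℝ) < |c|+1 := by positivity
        rw [lt_div_iff₀ hpos] at hθ2
        exact hθ2
      have h1 : c*Real.sin tt ≤ |c| * Real.sin tt :=
        mul_le_mul_of_nonneg_right (le_abs_self c) hsint.le
      have h2 : |c| * Real.sin tt ≤ |c| * tt :=
        mul_le_mul_of_nonneg_left hsintlt.le (abs_nonneg c)
      have h3 : |c| * tt < b/2 := by
        rw [htt_def]
        nlinarith [abs_nonneg c, hθ0]
      have h4 : b/2 ≤ b*Real.cos tt := by nlinarith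
      have hkey : c*Real.sin tt < b*Real.cos tt := by linarith
      have hcosθ : Real.cos θ = 1 - 2*Real.sin tt^2 := by
        rw [show θ = 2*tt by rw [htt_def]; ring, Real.cos_two_mul]
        linear_combination 2*Real.sin_sq_add_cos_sq tt
      have hsinθ : Real.sin θ = 2*Real.sin tt*Real.cos tt := by
        rw [show θ = 2*tt by rw [htt_def]; ring, Real.sin_two_mul]
      rw [hcosθ, hsinθ]
      nlinarith [mul_pos hsint (sub_pos.mpr hkey)]
    · -- c = -1 : then eb = -e₀ and every θ ∈ (0, π) works
      have h5 : ‖eb + e₀‖^2 = 0 := by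
        rw [norm_add_sq_real, hebS, he₀S, ← hc_def, hcm]; ring
      have h6 : eb + e₀ = 0 := by
        apply norm_eq_zero.mp
        nlinarith [norm_nonneg (eb + e₀)]
      have heb : eb = -e₀ := eq_neg_of_add_eq_zero_left h6
      refine ⟨π, Real.pi_pos, ?_⟩
      intro θ hθ0 hθπ
      apply hCap _ (norm_comb he₀S hu hperp θ)
      rw [hinner θ]
      have hbu : ⟪eb, u⟫ = (0:ℝ) := by
        rw [heb, inner_neg_left, real_inner_comm, hperp, neg_zero]
      rw [hbu, hcm]
      have hsin : 0 < Real.sin (θ/2) :=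
        Real.sin_pos_of_pos_of_lt_pi (by linarith) (by linarith [Real.pi_pos])
      have hcosθ : Real.cos θ = 1 - 2*Real.sin (θ/2)^2 := by
        nth_rewrite 1 [show θ = 2*(θ/2) by ring]
        rw [Real.cos_two_mul]
        linear_combination 2*Real.sin_sq_add_cos_sq (θ/2)
      nlinarith [hsin]
  -- find some admissible direction u₀ to approach e₀
  obtain ⟨u₀, hu₀, hu₀p, hu₀c⟩ :
      ∃ u : Euc N, ‖u‖ = 1 ∧ ⟪u, e₀⟫ = (0:ℝ) ∧ (0 < ⟪eb, u⟫ ∨ c = -1) := by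
    by_cases hcm : c = -1
    · obtain ⟨u, h1, h2⟩ := exists_perp hN e₀ he₀S
      exact ⟨u, h1, h2, Or.inr hcm⟩
    · have hcgt : -1 < c := lt_of_le_of_ne (abs_le.mp hcabs).1 (Ne.symm hcm)
      have hd02 : ‖eb - c•e₀‖^2 = 1 - c^2 := by
        rw [norm_sub_sq_real, real_inner_smul_right, ← hc_def, norm_smul, he₀S, mul_one,
          hebS, Real.norm_eq_abs, sq_abs]
        ring
      have hd0pos : 0 < ‖eb - c•e₀‖ := by
        have h7 : 0 < 1 - c^2 := by nlinarith
        nlinarith [norm_nonneg (eb - c•e₀)]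
      have hd0ne : eb - c•e₀ ≠ 0 := by
        intro h; rw [h, norm_zero] at hd0pos; exact lt_irrefl _ hd0pos
      refine ⟨‖eb - c•e₀‖⁻¹ • (eb - c•e₀), norm_smul_inv_norm hd0ne, ?_, Or.inl ?_⟩
      · rw [real_inner_smul_left, inner_sub_left, real_inner_smul_left,
          inner_unit_self he₀S, ← hc_def]
        ring
      · rw [real_inner_smul_right, inner_sub_right, real_inner_smul_right, ← hc_def,
          inner_unit_self hebS]
        have h7 : 0 < 1 - c^2 := by nlinarith [lt_of_le_of_ne (abs_le.mp hcabs).1 (Ne.symm hcm)]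
        have h8 : (0:ℝ) < ‖eb - c•e₀‖⁻¹ := by
          apply inv_pos.mpr
          have h9 : ‖eb - c•e₀‖^2 = 1 - c^2 := by
            rw [norm_sub_sq_real, real_inner_smul_right, ← hc_def, norm_smul, he₀S, mul_one,
              hebS, Real.norm_eq_abs, sq_abs]
            ring
          nlinarith [norm_nonneg (eb - c•e₀)]
        have : (1:ℝ) - c*c = 1 - c^2 := by ring
        rw [this]
        positivity
  obtain ⟨δ₀, hδ₀, hwin₀⟩ := hWIN u₀ hu₀ hu₀p hu₀c
  set seq : ℕ → Euc N :=
    fun n => (Real.cos (δ₀/((n:ℝ)+2)))•e₀ + (Real.sin (δ₀/((n:ℝ)+2)))•u₀ with hseq_def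
  have hseqNs : ∀ n, seq n ∈ Ns := by
    intro n
    apply hwin₀
    · positivity
    · apply div_lt_self hδ₀
      have : (0:ℝ) ≤ (n:ℝ) := Nat.cast_nonneg n
      linarith
  have hseqlim : Tendsto seq atTop (𝓝 e₀) := by
    have hden : Tendsto (fun n : ℕ => ((n:ℝ)+2)) atTop atTop :=
      tendsto_atTop_add_const_right atTop 2 tendsto_natCast_atTop_atTop
    have hθlim : Tendsto (fun n : ℕ => δ₀/((n:ℝ)+2)) atTop (𝓝 0) := by
      simpa [div_eq_mul_inv] using hden.inv_tendsto_atTop.const_mul δ₀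
    have hcoslim : Tendsto (fun n : ℕ => Real.cos (δ₀/((n:ℝ)+2))) atTop (𝓝 1) := by
      have := (Real.continuous_cos.tendsto 0).comp hθlim
      simpa [Function.comp_def] using this
    have hsinlim : Tendsto (fun n : ℕ => Real.sin (δ₀/((n:ℝ)+2))) atTop (𝓝 0) := by
      have := (Real.continuous_sin.tendsto 0).comp hθlim
      simpa [Function.comp_def] using this
    have hlim2 : Tendsto seq atTop (𝓝 ((1:ℝ)•e₀ + (0:ℝ)•u₀)) :=
      (hcoslim.smul_const e₀).add (hsinlim.smul_const u₀)
    simpa using hlim2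
  have he₀M : e₀ ∈ MMset N A₁ A₂ U :=
    MM_limit hU seq e₀ (fun n => hsub (hseqNs n)) hseqlim he₀S
  have he₀bd : e₀ ∈ relBoundary (unitSph N) Ns :=
    ⟨⟨he₀S, mem_closure_of_tendsto hseqlim (Eventually.of_forall hseqNs)⟩,
      subset_closure ⟨he₀S, he₀Ns⟩⟩
  have hsym : ∀ z ∈ U, ∀ x ∈ domB N A₁ A₂, z (reflHyp e₀ x) = z x := by
    intro z hz x hx
    rcases lt_trichotomy (⟪x, e₀⟫ : ℝ) 0 with hlt | heq | hgt
    · have hx'B : reflHyp e₀ x ∈ domB N A₁ A₂ := refl_mem_domB he₀S hx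
      have hx'in : (0:ℝ) < ⟪reflHyp e₀ x, e₀⟫ := by
        rw [refl_inner he₀S]; linarith
      have h1 := he₀M.2 z hz (reflHyp e₀ x) ⟨hx'B, hx'in⟩
      have h2 := hbd e₀ he₀bd z hz (reflHyp e₀ x) ⟨hx'B, hx'in⟩
      rw [refl_invol he₀S] at h1 h2
      exact le_antisymm h2 h1
    · rw [refl_of_inner_zero heq]
    · exact le_antisymm (he₀M.2 z hz x ⟨hx, hgt⟩) (hbd e₀ he₀bd z hz x ⟨hx, hgt⟩)
  -- main membership via rigidity
  have hmain : ∀ u : Euc N, ‖u‖ = 1 → ⟪u, e₀⟫ = (0:ℝ) → (0 < ⟪eb, u⟫ ∨ c = -1) →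
      ∀ a : ℝ, -1 ≤ a → a ≤ 1 →
      (a•e₀ + (Real.sqrt (1 - a^2))•u) ∈ MMset N A₁ A₂ U := by
    intro u hu hup huc a ha1 ha2
    obtain ⟨δu, hδu, hwinu⟩ := hWIN u hu hup huc
    have hr := rigid he₀S hu hup hsym δu hδu
      (fun θ h1 h2 => hsub (hwinu θ h1 h2))
      (Real.arccos a) (Real.arccos_nonneg a) (Real.arccos_le_pi a)
    rwa [Real.cos_arccos ha1 ha2, Real.sin_arccos] at hr
  -- a generic step : membership for e with canonical decomposition
  have hdecomp : ∀ e : Euc N, ‖e‖ = 1 → e - (⟪e, e₀⟫ : ℝ)•e₀ ≠ 0 →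
      (0 < ⟪eb, ‖e - (⟪e, e₀⟫ : ℝ)•e₀‖⁻¹ • (e - (⟪e, e₀⟫ : ℝ)•e₀)⟫ ∨ c = -1) →
      e ∈ MMset N A₁ A₂ U := by
    intro e he hde hcase
    set a : ℝ := ⟪e, e₀⟫ with ha_def
    have hd2 : ‖e - a•e₀‖^2 = 1 - a^2 := by
      rw [norm_sub_sq_real, real_inner_smul_right, ← ha_def, norm_smul, he₀S, mul_one,
        he, Real.norm_eq_abs, sq_abs]
      ring
    have hdn : 0 < ‖e - a•e₀‖ := norm_pos_iff.mpr hde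
    have ha21 : a^2 < 1 := by nlinarith
    have hu1 : ‖‖e - a•e₀‖⁻¹ • (e - a•e₀)‖ = 1 := norm_smul_inv_norm hde
    have hup : ⟪‖e - a•e₀‖⁻¹ • (e - a•e₀), e₀⟫ = (0:ℝ) := by
      rw [real_inner_smul_left, inner_sub_left, real_inner_smul_left,
        inner_unit_self he₀S, ← ha_def]
      ring
    have hmm := hmain _ hu1 hup hcase a (by nlinarith) (by nlinarith)
    have hsq : Real.sqrt (1 - a^2) = ‖e - a•e₀‖ := by
      rw [← hd2, Real.sqrt_sq hdn.le]
    rw [hsq, smul_smul, mul_inv_cancel₀ hdn.ne', one_smul] at hmm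
    rwa [show a•e₀ + (e - a•e₀) = e by abel] at hmm
  -- membership of ±e₀
  have he₀mm : e₀ ∈ MMset N A₁ A₂ U := he₀M
  have hne₀mm : (-e₀) ∈ MMset N A₁ A₂ U := by
    refine ⟨?_, fun z hz x hx => ?_⟩
    · show ‖-e₀‖ = 1
      rw [norm_neg, he₀S]
    · rw [refl_neg]
      exact le_of_eq (hsym z hz x hx.1)
  by_cases hcm : c = -1
  · -- every unit vector belongs to ℳ ; any pole works
    refine ⟨v₀, hv₀, fun e he _ => ?_⟩
    by_cases hde : e - (⟪e, e₀⟫ : ℝ)•e₀ = 0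
    · have heq : e = (⟪e, e₀⟫ : ℝ)•e₀ := by rwa [sub_eq_zero] at hde
      have habs1 : |(⟪e, e₀⟫ : ℝ)| = 1 := by
        have h10 := congrArg norm heq
        rw [he, norm_smul, he₀S, mul_one, Real.norm_eq_abs] at h10
        exact h10.symm
      rcases (abs_eq (by norm_num : (0:ℝ) ≤ 1)).mp habs1 with h1 | h1
      · rw [heq, h1, one_smul]
        exact he₀mm
      · rw [heq, h1, neg_one_smul]
        exact hne₀mm
    · exact hdecomp e he hde (Or.inr hcm)
  · -- c > -1 : the pole is the normalized tangential part of eb at e₀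
    have hcgt : -1 < c := lt_of_le_of_ne (abs_le.mp hcabs).1 (Ne.symm hcm)
    have hd02 : ‖eb - c•e₀‖^2 = 1 - c^2 := by
      rw [norm_sub_sq_real, real_inner_smul_right, ← hc_def, norm_smul, he₀S, mul_one,
        hebS, Real.norm_eq_abs, sq_abs]
      ring
    have hc2pos : (0:ℝ) < 1 - c^2 := by nlinarith
    have hd0pos : 0 < ‖eb - c•e₀‖ := by nlinarith [norm_nonneg (eb - c•e₀)]
    have hd0ne : eb - c•e₀ ≠ 0 := by
      intro h; rw [h, norm_zero] at hd0pos; exact lt_irrefl _ hd0pos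
    set p : Euc N := ‖eb - c•e₀‖⁻¹ • (eb - c•e₀) with hp_def
    have hp1 : ‖p‖ = 1 := norm_smul_inv_norm hd0ne
    have hpe₀ : ⟪e₀, p⟫ = (0:ℝ) := by
      rw [hp_def, real_inner_smul_right, inner_sub_right, real_inner_smul_right,
        inner_unit_self he₀S, real_inner_comm eb e₀, ← hc_def]
      ring
    have hstrict : ∀ e : Euc N, ‖e‖ = 1 → (0:ℝ) < ⟪e, p⟫ → e ∈ MMset N A₁ A₂ U := by
      intro e he hep
      have hde : e - (⟪e, e₀⟫ : ℝ)•e₀ ≠ 0 := by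
        intro h
        have heq : e = (⟪e, e₀⟫ : ℝ)•e₀ := by rwa [sub_eq_zero] at h
        rw [heq, real_inner_smul_left, hpe₀, mul_zero] at hep
        exact lt_irrefl _ hep
      apply hdecomp e he hde
      left
      set a : ℝ := ⟪e, e₀⟫ with ha_def
      have hdn : 0 < ‖e - a•e₀‖ := norm_pos_iff.mpr hde
      have hnum : (0:ℝ) < ⟪e, eb⟫ - c*a := by
        have h7 : ⟪e, p⟫ = ‖eb - c•e₀‖⁻¹ * (⟪e, eb⟫ - c*a) := by
          rw [hp_def, real_inner_smul_right, inner_sub_right, real_inner_smul_right, ← ha_def]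
        rw [h7] at hep
        by_contra hcon
        push_neg at hcon
        have : ‖eb - c•e₀‖⁻¹ * (⟪e, eb⟫ - c*a) ≤ 0 :=
          mul_nonpos_of_nonneg_of_nonpos (inv_nonneg.mpr (norm_nonneg _)) hcon
        linarith
      have h8 : ⟪eb, ‖e - a•e₀‖⁻¹ • (e - a•e₀)⟫
          = ‖e - a•e₀‖⁻¹ * (⟪e, eb⟫ - c*a) := by
        rw [real_inner_smul_right, inner_sub_right, real_inner_smul_right, ← hc_def,
          real_inner_comm e eb]
        ring
      rw [h8]
      exact mul_pos (inv_pos.mpr hdn) hnum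
    refine ⟨p, hp1, fun e he hep => ?_⟩
    rcases lt_or_eq_of_le hep with h | h
    · exact hstrict e he h
    · -- equatorial case : approximate from the open hemisphere
      have hip : ⟪e, p⟫ = (0:ℝ) := h.symm
      set g : ℕ → Euc N := fun n => e + (((n:ℝ)+1)⁻¹)•p with hg_def
      have hgnorm : ∀ n : ℕ, ‖g n‖^2 = 1 + (((n:ℝ)+1)⁻¹)^2 := by
        intro n
        rw [hg_def]
        rw [norm_add_sq_real, he, real_inner_smul_right, hip, norm_smul, hp1, mul_one,
          Real.norm_eq_abs, sq_abs]
        ring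
      have hgpos : ∀ n : ℕ, 0 < ‖g n‖ := by
        intro n
        have h9 := hgnorm n
        nlinarith [norm_nonneg (g n), sq_nonneg (((n:ℝ)+1)⁻¹)]
      have hgne : ∀ n : ℕ, g n ≠ 0 := by
        intro n h9
        have := hgpos n
        rw [h9, norm_zero] at this
        exact lt_irrefl _ this
      set f : ℕ → Euc N := fun n => ‖g n‖⁻¹ • g n with hf_def
      have hfS : ∀ n, ‖f n‖ = 1 := fun n => norm_smul_inv_norm (hgne n)
      have hfM : ∀ n, f n ∈ MMset N A₁ A₂ U := by
        intro n
        apply hstrict _ (hfS n)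
        rw [hf_def, real_inner_smul_left, hg_def, inner_add_left, real_inner_smul_left,
          inner_unit_self hp1, hip]
        have h9 : (0:ℝ) < (((n:ℝ)+1)⁻¹) := by positivity
        have h10 : (0:ℝ) < ‖g n‖⁻¹ := inv_pos.mpr (hgpos n)
        rw [hg_def] at h10
        nlinarith
      have hflim : Tendsto f atTop (𝓝 e) := by
        have hden : Tendsto (fun n : ℕ => ((n:ℝ)+1)) atTop atTop :=
          tendsto_atTop_add_const_right atTop 1 tendsto_natCast_atTop_atTop
        have ht0 : Tendsto (fun n : ℕ => ((n:ℝ)+1)⁻¹) atTop (𝓝 0) :=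
          hden.inv_tendsto_atTop
        have hglim : Tendsto g atTop (𝓝 e) := by
          have h11 : Tendsto g atTop (𝓝 (e + (0:ℝ)•p)) :=
            tendsto_const_nhds.add (ht0.smul_const p)
          simpa using h11
        have hnlim : Tendsto (fun n => ‖g n‖) atTop (𝓝 1) := by
          have := (continuous_norm.tendsto e).comp hglim
          rwa [he] at this
        have hinvlim : Tendsto (fun n => ‖g n‖⁻¹) atTop (𝓝 1) := by
          have := hnlim.inv₀ one_ne_zero
          simpa using this
        have : Tendsto f atTop (𝓝 ((1:ℝ)•e)) := hinvlim.smul hglim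
        simpa using this
      exact MM_limit hU f e hfM hflim he

end S15


/-- geometric characterization of foliated Schwarz symmetry
(Corollary 4.1, after Brock and Saldaña–Weth). -/
theorem statement15
    (N : ℕ) (hN : 2 ≤ N) (A₁ A₂ : ℝ) (hA₁ : 0 ≤ A₁) (hA : A₁ < A₂)
    (U : Set (Euc N → ℝ))
    (hU : ∀ z ∈ U, ContinuousOn z (closure (domB N A₁ A₂)))
    (Ns : Set (Euc N))
    (hsub : Ns ⊆ {e ∈ unitSph N | ∀ z ∈ U, ∀ x ∈ halfB N A₁ A₂ e,
      z (reflHyp e x) ≤ z x})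
    (hne : Ns.Nonempty)
    (hopen : ∃ V : Set (Euc N), IsOpen V ∧ Ns = V ∩ unitSph N)
    (hbd : ∀ e ∈ relBoundary (unitSph N) Ns, ∀ z ∈ U, ∀ x ∈ halfB N A₁ A₂ e,
      z x ≤ z (reflHyp e x)) :
    ∃ p ∈ unitSph N, ∀ z ∈ U, FoliatedSchwarzSymm (closure (domB N A₁ A₂)) z p := by
  obtain ⟨p, hp1, hHemi⟩ := S15.exists_pole hN A₁ A₂ U hU Ns hsub hne hopen hbd
  refine ⟨p, hp1, fun z hz => ?_⟩
  intro x hx y hy hnxy hip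
  by_cases hxy : x = y
  · exact le_of_eq (by rw [hxy])
  have hbound : ∀ w : Euc N, w ∈ closure (domB N A₁ A₂) → A₁ ≤ ‖w‖ ∧ ‖w‖ ≤ A₂ := by
    intro w hw
    constructor
    · have hsubc : domB N A₁ A₂ ⊆ {v : Euc N | A₁ ≤ ‖v‖} := by
        rintro v ⟨h1, h2⟩
        rcases h1 with h1 | h1
        · rw [h1]; exact norm_nonneg v
        · exact h1.le
      exact closure_minimal hsubc (isClosed_le continuous_const continuous_norm) hw
    · have hsubc : domB N A₁ A₂ ⊆ {v : Euc N | ‖v‖ ≤ A₂} := fun v hv => hv.2.le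
      exact closure_minimal hsubc (isClosed_le continuous_norm continuous_const) hw
  have hr0 : 0 < ‖x‖ := by
    rcases (norm_nonneg x).lt_or_eq with h | h
    · exact h
    · exfalso
      apply hxy
      have hx0 : x = 0 := norm_eq_zero.mp h.symm
      have hy0 : y = 0 := norm_eq_zero.mp (by rw [← hnxy]; exact h.symm)
      rw [hx0, hy0]
  set m : ℝ := (A₁ + A₂)/2 with hm_def
  have hm1 : A₁ < m := by rw [hm_def]; linarith
  have hm2 : m < A₂ := by rw [hm_def]; linarith
  have hxA₁ : A₁ ≤ ‖x‖ := (hbound x hx).1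
  have hxA₂ : ‖x‖ ≤ A₂ := (hbound x hx).2
  set t : ℕ → ℝ := fun n => ‖x‖ + (m - ‖x‖)/((n:ℝ)+2) with ht_def
  have hlam : ∀ n : ℕ, 0 < ((n:ℝ)+2)⁻¹ ∧ ((n:ℝ)+2)⁻¹ ≤ 1 := by
    intro n
    have hn0 : (0:ℝ) ≤ (n:ℝ) := Nat.cast_nonneg n
    have hpos : (0:ℝ) < (n:ℝ)+2 := by linarith
    constructor
    · positivity
    · have h2 : ((n:ℝ)+2)⁻¹ * ((n:ℝ)+2) = 1 := inv_mul_cancel₀ hpos.ne'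
      nlinarith [inv_pos.mpr hpos]
  have htn : ∀ n : ℕ, A₁ < t n ∧ t n < A₂ ∧ 0 < t n := by
    intro n
    obtain ⟨hl1, hl2⟩ := hlam n
    have hrw : t n = (1 - ((n:ℝ)+2)⁻¹)*‖x‖ + ((n:ℝ)+2)⁻¹*m := by
      rw [ht_def]
      have hn0 : (0:ℝ) ≤ (n:ℝ) := Nat.cast_nonneg n
      field_simp
      ring
    refine ⟨?_, ?_, ?_⟩
    · rw [hrw]; nlinarith
    · rw [hrw]; nlinarith
    · rw [hrw]; nlinarith
  set cs : ℕ → ℝ := fun n => t n / ‖x‖ with hcs_def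
  have hcspos : ∀ n, 0 < cs n := fun n => div_pos (htn n).2.2 hr0
  have hxn : ∀ n, ‖cs n • x‖ = t n := by
    intro n
    rw [norm_smul, Real.norm_eq_abs, abs_of_pos (hcspos n), hcs_def]
    field_simp
  have hyn : ∀ n, ‖cs n • y‖ = t n := by
    intro n
    rw [norm_smul, Real.norm_eq_abs, abs_of_pos (hcspos n), ← hnxy, hcs_def]
    field_simp
  have hxnB : ∀ n, cs n • x ∈ domB N A₁ A₂ := fun n =>
    ⟨Or.inr (by rw [hxn n]; exact (htn n).1), by rw [hxn n]; exact (htn n).2.1⟩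
  have hynB : ∀ n, cs n • y ∈ domB N A₁ A₂ := fun n =>
    ⟨Or.inr (by rw [hyn n]; exact (htn n).1), by rw [hyn n]; exact (htn n).2.1⟩
  have hzineq : ∀ n, z (cs n • y) ≤ z (cs n • x) := by
    intro n
    set dn : Euc N := cs n • x - cs n • y with hdn_def
    have hdn0 : dn ≠ 0 := by
      rw [hdn_def, ← smul_sub]
      exact smul_ne_zero (hcspos n).ne' (sub_ne_zero.mpr hxy)
    have hdnn : 0 < ‖dn‖ := norm_pos_iff.mpr hdn0
    set en : Euc N := ‖dn‖⁻¹ • dn with hen_def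
    have hen1 : ‖en‖ = 1 := norm_smul_inv_norm hdn0
    have henp : (0:ℝ) ≤ ⟪en, p⟫ := by
      have h7 : ⟪en, p⟫ = ‖dn‖⁻¹ * ⟪dn, p⟫ := by
        rw [hen_def, real_inner_smul_left]
      have h8 : ⟪dn, p⟫ = cs n * (⟪x, p⟫ - ⟪y, p⟫) := by
        rw [hdn_def, ← smul_sub, real_inner_smul_left, inner_sub_left]
      rw [h7, h8]
      exact mul_nonneg (inv_nonneg.mpr (norm_nonneg _))
        (mul_nonneg (hcspos n).le (by linarith))
    have henM := hHemi en hen1 henp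
    have hinxd : ⟪cs n • x, dn⟫ = ‖dn‖^2/2 := by
      have hd2 : ‖dn‖^2 = ‖cs n • x‖^2 - 2*⟪cs n • x, cs n • y⟫ + ‖cs n • y‖^2 := by
        rw [hdn_def, norm_sub_sq_real]
      have hin : ⟪cs n • x, dn⟫ = ‖cs n • x‖^2 - ⟪cs n • x, cs n • y⟫ := by
        rw [hdn_def, inner_sub_right, real_inner_self_eq_norm_sq]
      rw [hxn n, hyn n] at hd2
      rw [hxn n] at hin
      rw [hin]
      clear_value dn cs t
      linarith
    have hxin : (0:ℝ) < ⟪cs n • x, en⟫ := by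
      rw [hen_def, real_inner_smul_right, hinxd]
      positivity
    have hreflxy : reflHyp en (cs n • x) = cs n • y := by
      show cs n • x - (2*⟪cs n • x, en⟫)•en = cs n • y
      rw [hen_def, real_inner_smul_right, hinxd, smul_smul]
      have h9 : (2*(‖dn‖⁻¹*(‖dn‖^2/2)))*‖dn‖⁻¹ = 1 := by
        field_simp
      rw [h9, one_smul, hdn_def]
      abel
    have h10 := henM.2 z hz (cs n • x) ⟨hxnB n, hxin⟩
    rwa [hreflxy] at h10
  have hden : Tendsto (fun n : ℕ => ((n:ℝ)+2)) atTop atTop :=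
    tendsto_atTop_add_const_right atTop 2 tendsto_natCast_atTop_atTop
  have hinv0 : Tendsto (fun n : ℕ => ((n:ℝ)+2)⁻¹) atTop (𝓝 0) := hden.inv_tendsto_atTop
  have htlim : Tendsto t atTop (𝓝 ‖x‖) := by
    have h11 : Tendsto (fun n : ℕ => ‖x‖ + (m - ‖x‖)*((n:ℝ)+2)⁻¹) atTop
        (𝓝 (‖x‖ + (m-‖x‖)*0)) :=
      tendsto_const_nhds.add (tendsto_const_nhds.mul hinv0)
    simp only [mul_zero, add_zero] at h11
    apply h11.congr
    intro n
    simp only [ht_def, div_eq_mul_inv]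
  have hclim : Tendsto cs atTop (𝓝 1) := by
    have h12 : Tendsto (fun n => t n / ‖x‖) atTop (𝓝 (‖x‖/‖x‖)) := htlim.div_const _
    rw [div_self hr0.ne'] at h12
    exact h12
  have hxlim : Tendsto (fun n => cs n • x) atTop (𝓝 x) := by
    have h13 : Tendsto (fun n => cs n • x) atTop (𝓝 ((1:ℝ)•x)) := hclim.smul_const x
    rwa [one_smul] at h13
  have hylim : Tendsto (fun n => cs n • y) atTop (𝓝 y) := by
    have h13 : Tendsto (fun n => cs n • y) atTop (𝓝 ((1:ℝ)•y)) := hclim.smul_const y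
    rwa [one_smul] at h13
  have hzx : Tendsto (fun n => z (cs n • x)) atTop (𝓝 (z x)) :=
    ((hU z hz).continuousWithinAt hx).tendsto.comp
      (tendsto_nhdsWithin_of_tendsto_nhds_of_eventually_within _ hxlim
        (Eventually.of_forall fun n => subset_closure (hxnB n)))
  have hzy : Tendsto (fun n => z (cs n • y)) atTop (𝓝 (z y)) :=
    ((hU z hz).continuousWithinAt hy).tendsto.comp
      (tendsto_nhdsWithin_of_tendsto_nhds_of_eventually_within _ hylim
        (Eventually.of_forall fun n => subset_closure (hynB n)))
  exact le_of_tendsto_of_tendsto' hzy hzx hzineq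

end
end
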